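/- arXiv:1811.10675 — 10 statements merged into one kernel-verified Lean document; each statement's English description precedes it below -/
import Mathlib

section
/- A group G is left-orderable if and only if for every nontrivial finitely generated subgroup H of G there exists a surjective homomorphism from H onto a nontrivial left-orderable group. -/
/-!
A left order on a group is the same thing as a positive cone: a subsemigroup `P` avoiding `1`
with `P ∪ P⁻¹ = G \ {1}`. By compactness (an ultrafilter on finite subsets) it is enough to find,
for every finite `T ⊆ G \ {1}`, a subsemigroup avoiding `1` that contains each element of `T` or
its inverse. This goes by induction on `|T|`: the subgroup `H` generated by `T` maps onto a
nontrivial left-ordered group `L` with kernel `K`, so some element of `T` lies outside `K`. Pulling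
back the cone of `L` takes care of the elements of `T` outside `K`; a partial cone for the smaller
set `T ∩ K`, found by induction, is then adjoined lexicographically.
-/

/-- A group is left-orderable if it admits a strict total order invariant under
left multiplication. -/
def LeftOrderable (G : Type*) [Group G] : Prop :=
  ∃ r : G → G → Prop, IsStrictTotalOrder G r ∧ ∀ f g h : G, r g h → r (f * g) (f * h)

open Function

universe u

/-- The positive cones of left orders are the case `T = {1}ᶜ`. -/
structure IsConeOn {G : Type*} [Group G] (T Q : Set G) : Prop where
  mul_mem : ∀ ⦃a⦄, a ∈ Q → ∀ ⦃b⦄, b ∈ Q → a * b ∈ Q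
  one_notMem : (1 : G) ∉ Q
  mem_or_inv_mem : ∀ ⦃g⦄, g ∈ T → g ∈ Q ∨ g⁻¹ ∈ Q

namespace IsConeOn

variable {G H : Type*} [Group G] [Group H] {S T Q : Set G}

theorem mono (hQ : IsConeOn T Q) (hST : S ⊆ T) : IsConeOn S Q :=
  ⟨hQ.mul_mem, hQ.one_notMem, fun _ hg => hQ.mem_or_inv_mem (hST hg)⟩

theorem comap {T P : Set H} (hP : IsConeOn T P) (f : G →* H) : IsConeOn (f ⁻¹' T) (f ⁻¹' P) where
  mul_mem a ha b hb := by simpa only [Set.mem_preimage, map_mul] using hP.mul_mem ha hb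
  one_notMem := by simpa only [Set.mem_preimage, map_one] using hP.one_notMem
  mem_or_inv_mem g hg := by simpa only [Set.mem_preimage, map_inv] using hP.mem_or_inv_mem hg

theorem image (hQ : IsConeOn T Q) {f : G →* H} (hf : Injective f) :
    IsConeOn (f '' T) (f '' Q) where
  mul_mem := by
    rintro _ ⟨a, ha, rfl⟩ _ ⟨b, hb, rfl⟩
    exact ⟨a * b, hQ.mul_mem ha hb, map_mul f a b⟩
  one_notMem := by
    rintro ⟨a, ha, h1⟩
    exact hQ.one_notMem ((map_eq_one_iff f hf).mp h1 ▸ ha)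
  mem_or_inv_mem := by
    rintro _ ⟨g, hg, rfl⟩
    rcases hQ.mem_or_inv_mem hg with h | h
    · exact .inl ⟨g, h, rfl⟩
    · exact .inr ⟨g⁻¹, h, map_inv f g⟩

/-- Lexicographic combination: `Q₁` takes precedence, `Q₀` only decides inside `K`. -/
theorem union_inter {K : Subgroup G} {Q₁ Q₀ : Set G} (h₁ : IsConeOn S Q₁) (h₀ : IsConeOn T Q₀)
    (hK : ∀ a ∈ Q₁, ∀ k ∈ K, a * k ∈ Q₁ ∧ k * a ∈ Q₁) :
    IsConeOn (S ∪ (T ∩ K)) (Q₁ ∪ (Q₀ ∩ K)) where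
  mul_mem := by
    rintro a (ha | ⟨ha, haK⟩) b (hb | ⟨hb, hbK⟩)
    · exact .inl (h₁.mul_mem ha hb)
    · exact .inl (hK a ha b hbK).1
    · exact .inl (hK b hb a haK).2
    · exact .inr ⟨h₀.mul_mem ha hb, K.mul_mem haK hbK⟩
  one_notMem := by
    rintro (h | ⟨h, -⟩)
    · exact h₁.one_notMem h
    · exact h₀.one_notMem h
  mem_or_inv_mem := by
    rintro g (hg | ⟨hg, hgK⟩)
    · exact (h₁.mem_or_inv_mem hg).imp .inl .inl
    · exact (h₀.mem_or_inv_mem hg).imp (fun h => .inr ⟨h, hgK⟩)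
        (fun h => .inr ⟨h, K.inv_mem hgK⟩)

end IsConeOn

section Cones

variable {G H : Type*} [Group G] [Group H]

theorem LeftOrderable.of_isConeOn {P : Set G} (hP : IsConeOn {1}ᶜ P) : LeftOrderable G := by
  refine ⟨fun g h => g⁻¹ * h ∈ P,
    { trichotomous := fun g h hgh hhg => ?_,
      irrefl := fun g => by simpa only [inv_mul_cancel] using hP.one_notMem,
      trans := fun g h k hgh hhk => by
        simpa only [mul_assoc, mul_inv_cancel_left] using hP.mul_mem hgh hhk },
    fun f g h hgh => by simpa only [mul_inv_rev, mul_assoc, inv_mul_cancel_left] using hgh⟩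
  by_contra hne
  have : g⁻¹ * h ≠ 1 := fun e => hne (inv_mul_eq_one.mp e)
  rcases hP.mem_or_inv_mem this with h' | h'
  · exact hgh h'
  · exact hhg (by simpa only [mul_inv_rev, inv_inv] using h')

theorem LeftOrderable.exists_isConeOn (hG : LeftOrderable G) : ∃ P : Set G, IsConeOn {1}ᶜ P := by
  obtain ⟨r, hr, hmul⟩ := hG
  refine ⟨{g | r 1 g}, ⟨fun a ha b hb => ?_, hr.irrefl 1, fun g hg => ?_⟩⟩
  · exact hr.trans _ _ _ ha (by simpa only [mul_one] using hmul a 1 b hb)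
  · rcases trichotomous_of r 1 g with h | h | h
    · exact .inl h
    · exact absurd h.symm hg
    · exact .inr (by simpa only [inv_mul_cancel, mul_one] using hmul g⁻¹ g 1 h : r 1 g⁻¹)

theorem LeftOrderable.of_injective (hH : LeftOrderable H) {f : G →* H} (hf : Injective f) :
    LeftOrderable G := by
  obtain ⟨P, hP⟩ := hH.exists_isConeOn
  exact .of_isConeOn ((hP.comap f).mono fun g hg => (map_ne_one_iff f hf).mpr hg)

theorem exists_isConeOn_of_forall_finset {S : Set G}
    (h : ∀ T : Finset G, ↑T ⊆ S → ∃ Q, IsConeOn (T : Set G) Q) : ∃ P, IsConeOn S P := by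
  classical
  choose Q hQ using fun T : Finset G => h (T.filter (· ∈ S)) fun g hg => (Finset.mem_filter.mp hg).2
  let 𝒰 := Ultrafilter.of (Filter.atTop : Filter (Finset G))
  refine ⟨{g | ∀ᶠ T in 𝒰, g ∈ Q T}, ⟨fun a ha b hb => ?_, fun h1 => ?_, fun g hg => ?_⟩⟩
  · exact (ha.and hb).mono fun T h => (hQ T).mul_mem h.1 h.2
  · obtain ⟨T, hT⟩ := Filter.Eventually.exists h1
    exact (hQ T).one_notMem hT
  · refine Ultrafilter.eventually_or.mp (Ultrafilter.of_le _ ?_)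
    filter_upwards [Filter.eventually_ge_atTop {g}] with T hT
    exact (hQ T).mem_or_inv_mem (Finset.mem_filter.mpr ⟨hT (Finset.mem_singleton_self g), hg⟩)

end Cones

theorem exists_isConeOn_finset {G : Type u} [Group G]
    (hG : ∀ H : Subgroup G, H.FG → H ≠ ⊥ →
      ∃ (L : Type u) (_ : Group L) (φ : H →* L),
        Surjective φ ∧ Nontrivial L ∧ LeftOrderable L)
    (T : Finset G) (hT : ↑T ⊆ ({1}ᶜ : Set G)) : ∃ Q, IsConeOn (T : Set G) Q := by
  classical
  induction T using Finset.strongInduction with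
  | H T ih =>
  set H := Subgroup.closure (T : Set G)
  have hTH : ∀ g ∈ T, g ∈ H := fun g hg => Subgroup.subset_closure hg
  by_cases hH : H = ⊥
  · refine ⟨∅, ⟨fun _ h => h.elim, id, fun g hg => (hT hg ?_).elim⟩⟩
    simpa only [hH, Subgroup.mem_bot, Set.mem_singleton_iff] using hTH g hg
  obtain ⟨L, _, φ, hφ, hL, hLo⟩ := hG H ⟨T, rfl⟩ hH
  obtain ⟨P, hP⟩ := hLo.exists_isConeOn
  set K := φ.ker.map H.subtype
  have hmemK (h : H) : (h : G) ∈ K ↔ φ h = 1 :=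
    (Subgroup.mem_map_iff_mem H.subtype_injective).trans φ.mem_ker
  have hTK : T.filter (· ∈ K) ⊂ T := by
    refine Finset.filter_ssubset.mpr ?_
    by_contra! hall
    have hφ1 (h : H) : φ h = 1 :=
      (hmemK h).mp ((Subgroup.closure_le K).mpr (fun g hg => hall g hg) h.2)
    obtain ⟨x, y, hxy⟩ := hL
    obtain ⟨a, rfl⟩ := hφ x
    obtain ⟨b, rfl⟩ := hφ y
    exact hxy (by rw [hφ1, hφ1])
  obtain ⟨Q₀, hQ₀⟩ := ih _ hTK ((Finset.coe_subset.mpr hTK.subset).trans hT)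
  have hK : ∀ a ∈ H.subtype '' (φ ⁻¹' P), ∀ k ∈ K,
      a * k ∈ H.subtype '' (φ ⁻¹' P) ∧ k * a ∈ H.subtype '' (φ ⁻¹' P) := by
    rintro _ ⟨a, ha, rfl⟩ _ ⟨k, hk, rfl⟩
    rw [SetLike.mem_coe, φ.mem_ker] at hk
    exact ⟨⟨a * k, by simpa [hk] using ha, rfl⟩, ⟨k * a, by simpa [hk] using ha, rfl⟩⟩
  refine ⟨_, (((hP.comap φ).image H.subtype_injective).union_inter hQ₀ hK).mono fun g hg => ?_⟩
  by_cases hgK : g ∈ K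
  · exact .inr ⟨Finset.mem_filter.mpr ⟨hg, hgK⟩, hgK⟩
  · exact .inl ⟨⟨g, hTH g hg⟩, fun h1 => hgK ((hmemK _).mpr h1), rfl⟩

/-- **Burns–Hale theorem.** A group `G` is left-orderable iff every nontrivial
finitely generated subgroup surjects onto a nontrivial left-orderable group. -/
theorem burnsHale {G : Type u} [Group G] :
    LeftOrderable G ↔
      ∀ H : Subgroup G, H.FG → H ≠ ⊥ →
        ∃ (L : Type u) (_ : Group L) (φ : H →* L),
          Function.Surjective φ ∧ Nontrivial L ∧ LeftOrderable L := by
  refine ⟨fun hG H _ hH => ⟨H, inferInstance, MonoidHom.id H, surjective_id,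
    H.nontrivial_iff_ne_bot.mpr hH, hG.of_injective H.subtype_injective⟩, fun hG => ?_⟩
  obtain ⟨P, hP⟩ := exists_isConeOn_of_forall_finset (exists_isConeOn_finset hG)
  exact .of_isConeOn hP
end

section
/- For any torsion-free group G, the following are equivalent: (1) every nonempty finite subset of G has an extreme point (G is weakly diffuse); (2) every finite subset A of G with |A| > 1 has at least two extreme points (G is diffuse). -/
/-!
Extreme points are preserved under left translation and inversion, and an extreme point of a
set is extreme in every subset containing it. Given distinct `a, c ∈ A`, pick an extreme point
`b` of the symmetric set `S ∪ S⁻¹`, where `S = a⁻¹A`. As `a⁻¹c ≠ 1` and its inverse both lie in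
`S ∪ S⁻¹`, `b ≠ 1`; one of `b`, `b⁻¹` lies in `S` and is extreme there, so translating back by
`a` gives an extreme point of `A` other than `a`.
-/

/-- `a` is an extreme point of `A` if `a ∈ A` and `a⁻¹A ∩ A⁻¹a = {1}`. -/
def IsExtremePoint {G : Type*} [Group G] (A : Set G) (a : G) : Prop :=
  a ∈ A ∧ {h : G | ∃ x ∈ A, h = a⁻¹ * x} ∩ {h : G | ∃ y ∈ A, h = y⁻¹ * a} = {1}

/-- A group is weakly diffuse if every nonempty finite subset has an extreme point. -/
def WeaklyDiffuse (G : Type*) [Group G] : Prop :=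
  ∀ A : Set G, A.Finite → A.Nonempty → ∃ a, IsExtremePoint A a

/-- A group is diffuse if every finite subset with more than one element has
at least two extreme points. -/
def Diffuse (G : Type*) [Group G] : Prop :=
  ∀ A : Set G, A.Finite → 1 < A.ncard →
    ∃ a b, a ≠ b ∧ IsExtremePoint A a ∧ IsExtremePoint A b

/-- A monoid is torsion-free if no nontrivial element has finite order
(the definition `Monoid.IsTorsionFree` of the older Mathlib). -/
def Monoid.IsTorsionFree (G : Type*) [Monoid G] : Prop :=
  ∀ g : G, g ≠ 1 → ¬IsOfFinOrder g

open Pointwise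

section

variable {G : Type*} [Group G] {A B : Set G} {a : G}

lemma isExtremePoint_iff :
    IsExtremePoint A a ↔ a ∈ A ∧ ∀ x ∈ A, ∀ y ∈ A, a⁻¹ * x = y⁻¹ * a → x = a ∧ y = a := by
  refine and_congr_right fun haA => ⟨fun h x hx y hy hxy => ?_, fun h => ?_⟩
  · have hx1 : a⁻¹ * x = 1 := by
      rw [← Set.mem_singleton_iff, ← h]
      exact ⟨⟨x, hx, rfl⟩, ⟨y, hy, hxy⟩⟩
    exact ⟨(inv_mul_eq_one.mp hx1).symm, inv_mul_eq_one.mp (hxy ▸ hx1)⟩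
  · ext g
    simp only [Set.mem_inter_iff, Set.mem_ofPred_eq, Set.mem_singleton_iff]
    constructor
    · rintro ⟨⟨x, hx, rfl⟩, ⟨y, hy, hxy⟩⟩
      rw [(h x hx y hy hxy).1, inv_mul_cancel]
    · rintro rfl
      exact ⟨⟨a, haA, (inv_mul_cancel a).symm⟩, ⟨a, haA, (inv_mul_cancel a).symm⟩⟩

namespace IsExtremePoint

lemma singleton (a : G) : IsExtremePoint {a} a :=
  isExtremePoint_iff.mpr ⟨rfl, fun _ hx _ hy _ => ⟨hx, hy⟩⟩

lemma mono (h : IsExtremePoint B a) (hAB : A ⊆ B) (haA : a ∈ A) : IsExtremePoint A a :=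
  isExtremePoint_iff.mpr
    ⟨haA, fun x hx y hy => (isExtremePoint_iff.mp h).2 x (hAB hx) y (hAB hy)⟩

lemma smul (h : IsExtremePoint A a) (g : G) : IsExtremePoint (g • A) (g * a) := by
  refine isExtremePoint_iff.mpr ⟨Set.smul_mem_smul_set (isExtremePoint_iff.mp h).1, ?_⟩
  rintro _ ⟨x, hx, rfl⟩ _ ⟨y, hy, rfl⟩ hxy
  have key : a⁻¹ * x = y⁻¹ * a := by simpa [mul_assoc] using hxy
  obtain ⟨rfl, rfl⟩ := (isExtremePoint_iff.mp h).2 x hx y hy key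
  exact ⟨rfl, rfl⟩

lemma inv (h : IsExtremePoint A a) : IsExtremePoint A⁻¹ a⁻¹ := by
  refine isExtremePoint_iff.mpr
    ⟨Set.inv_mem_inv.mpr (isExtremePoint_iff.mp h).1, fun x hx y hy hxy => ?_⟩
  have key : a⁻¹ * y⁻¹ = x⁻¹⁻¹ * a := by
    rw [inv_inv] at hxy ⊢
    calc a⁻¹ * y⁻¹ = a⁻¹ * (y⁻¹ * a⁻¹) * a := by group
      _ = x * a := by rw [← hxy]; group
  obtain ⟨hy', hx'⟩ := (isExtremePoint_iff.mp h).2 _ hy _ hx key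
  exact ⟨inv_eq_iff_eq_inv.mp hx', inv_eq_iff_eq_inv.mp hy'⟩

lemma eq_one_of_inv_mem (h : IsExtremePoint A 1) {x : G} (hx : x ∈ A) (hx' : x⁻¹ ∈ A) :
    x = 1 :=
  ((isExtremePoint_iff.mp h).2 x hx x⁻¹ hx' (by group)).1

lemma of_union_inv (h : IsExtremePoint (A ∪ A⁻¹) a) :
    IsExtremePoint A a ∨ IsExtremePoint A a⁻¹ := by
  rcases (isExtremePoint_iff.mp h).1 with haA | haA
  · exact .inl (h.mono Set.subset_union_left haA)
  · refine .inr (h.inv.mono ?_ haA)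
    rw [Set.union_inv, inv_inv]
    exact Set.subset_union_right

end IsExtremePoint

end

lemma WeaklyDiffuse.exists_isExtremePoint_ne {G : Type*} [Group G] (hG : WeaklyDiffuse G)
    {A : Set G} (hA : A.Finite) {a c : G} (hc : c ∈ A) (hca : c ≠ a) :
    ∃ b, b ≠ a ∧ IsExtremePoint A b := by
  set S := a⁻¹ • A
  have hcS : a⁻¹ * c ∈ S := Set.smul_mem_smul_set hc
  obtain ⟨b, hb⟩ := hG (S ∪ S⁻¹) (hA.smul_set.union hA.smul_set.inv) ⟨_, .inl hcS⟩
  have hb1 : b ≠ 1 := by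
    rintro rfl
    have := hb.eq_one_of_inv_mem (.inl hcS) (.inr (Set.inv_mem_inv.mpr hcS))
    exact hca (inv_mul_eq_one.mp this).symm
  suffices ∀ d, d ≠ 1 → IsExtremePoint S d → ∃ b, b ≠ a ∧ IsExtremePoint A b by
    rcases hb.of_union_inv with hd | hd
    · exact this b hb1 hd
    · exact this b⁻¹ (inv_ne_one.mpr hb1) hd
  intro d hd1 hd
  refine ⟨a * d, by simpa using hd1, ?_⟩
  simpa [S] using hd.smul a

theorem weaklyDiffuse_iff_diffuse_general {G : Type*} [Group G] :
    WeaklyDiffuse G ↔ Diffuse G := by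
  refine ⟨fun hG A hA hcard => ?_, fun hG A hA hne => ?_⟩
  · obtain ⟨a, ha⟩ := hG A hA (Set.nonempty_of_ncard_ne_zero (by omega))
    obtain ⟨c, hc, hca⟩ := Set.exists_ne_of_one_lt_ncard hcard a
    obtain ⟨b, hba, hb⟩ := hG.exists_isExtremePoint_ne hA hc hca
    exact ⟨a, b, hba.symm, ha, hb⟩
  · by_cases hcard : 1 < A.ncard
    · obtain ⟨a, -, -, ha, -⟩ := hG A hA hcard
      exact ⟨a, ha⟩
    · obtain ⟨a, rfl⟩ := ((Set.ncard_le_one_iff_eq hA).mp (by omega)).resolve_left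
        hne.ne_empty
      exact ⟨a, .singleton a⟩

/-- For a torsion-free group, weakly diffuse is equivalent to diffuse. -/
theorem weaklyDiffuse_iff_diffuse {G : Type*} [Group G]
    (hG : Monoid.IsTorsionFree G) : WeaklyDiffuse G ↔ Diffuse G :=
  weaklyDiffuse_iff_diffuse_general
end

section
/- Suppose X is a finite subset of a group G containing the identity, and 1 → K → ⟨X⟩ → H → 1 is a short exact sequence with H nontrivial, q : ⟨X⟩ → H the quotient map. If every subset Y of K with |Y| < |X| admits an extreme point, and q(X) admits an extreme point, then X admits an extreme point. Moreover, if q(a) is an extreme point of q(X) with a ∈ X, and b is an extreme point of a^{-1}X ∩ K, then ab is an extreme point of X. -/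
/-- The inductive step in the Burns–Hale theorem for diffuse groups: extreme points
lift through short exact sequences. -/
theorem extremePoint_of_ses {G : Type*} [Group G] {H : Type*} [Group H] [Nontrivial H]
    (X : Set G) (hXfin : X.Finite) (hX1 : (1 : G) ∈ X)
    (q : Subgroup.closure X →* H) (hq : Function.Surjective q)
    (K : Set G) (hK : K = {g : G | ∃ hg : g ∈ Subgroup.closure X, q ⟨g, hg⟩ = 1})
    (hsmall : ∀ Y : Set G, Y ⊆ K → Y.Finite → Y.ncard < X.ncard →
      ∃ b, IsExtremePoint Y b)
    (qX : Set H)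
    (hqX : qX = {h : H | ∃ x, ∃ hx : x ∈ X, q ⟨x, Subgroup.subset_closure hx⟩ = h})
    (hqXext : ∃ a, ∃ ha : a ∈ X, IsExtremePoint qX (q ⟨a, Subgroup.subset_closure ha⟩)) :
    (∃ e, IsExtremePoint X e) ∧
      ∀ a, ∀ ha : a ∈ X, IsExtremePoint qX (q ⟨a, Subgroup.subset_closure ha⟩) →
        ∀ b, IsExtremePoint ({g : G | ∃ x ∈ X, g = a⁻¹ * x} ∩ K) b →
          IsExtremePoint X (a * b) := by
  have key : ∀ a, ∀ ha : a ∈ X, IsExtremePoint qX (q ⟨a, Subgroup.subset_closure ha⟩) →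
      ∀ b, IsExtremePoint ({g : G | ∃ x ∈ X, g = a⁻¹ * x} ∩ K) b →
        IsExtremePoint X (a * b) := by
    intro a ha hqa b hbext
    obtain ⟨hbY, hbI⟩ := hbext
    obtain ⟨⟨x0, hx0, hbeq⟩, hbK⟩ := hbY
    rw [hK] at hbK
    obtain ⟨hbmem, hqb⟩ := hbK
    have habX : a * b ∈ X := by
      have h : a * b = x0 := by rw [hbeq]; group
      rwa [h]
    refine ⟨habX, ?_⟩
    ext g
    simp only [Set.mem_inter_iff, Set.mem_setOf_eq, Set.mem_singleton_iff]
    constructor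
    · rintro ⟨⟨x, hx, rfl⟩, y, hy, hgy⟩
      set A : Subgroup.closure X := ⟨a, Subgroup.subset_closure ha⟩ with hA
      set B : Subgroup.closure X := ⟨b, hbmem⟩ with hB
      set Xe : Subgroup.closure X := ⟨x, Subgroup.subset_closure hx⟩ with hXe
      set Ye : Subgroup.closure X := ⟨y, Subgroup.subset_closure hy⟩ with hYe
      have hS : B⁻¹ * A⁻¹ * Xe = Ye⁻¹ * (A * B) := by
        apply Subtype.ext
        push_cast
        simpa [mul_inv_rev, mul_assoc] using hgy
      have hqS := congrArg q hS
      simp only [map_mul, map_inv, hqb, inv_one, one_mul, mul_one] at hqS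
      -- hqS : (q A)⁻¹ * q Xe = (q Ye)⁻¹ * q A
      have hh : (q A)⁻¹ * q Xe = 1 := by
        have hmem : (q A)⁻¹ * q Xe ∈ ({1} : Set H) := by
          rw [← hqa.2]
          exact ⟨⟨q Xe, by rw [hqX]; exact ⟨x, hx, rfl⟩, rfl⟩,
                 ⟨q Ye, by rw [hqX]; exact ⟨y, hy, rfl⟩, hqS⟩⟩
        simpa using hmem
      have hXA : q Xe = q A := (inv_mul_eq_one.mp hh).symm
      have hYA : q Ye = q A := by
        rw [hh] at hqS
        exact (inv_mul_eq_one.mp hqS.symm)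
      have hx' : a⁻¹ * x ∈ {g : G | ∃ x' ∈ X, g = a⁻¹ * x'} ∩ K := by
        refine ⟨⟨x, hx, rfl⟩, ?_⟩
        rw [hK]
        refine ⟨mul_mem (inv_mem A.2) Xe.2, ?_⟩
        show q (A⁻¹ * Xe) = 1
        rw [map_mul, map_inv, hXA, inv_mul_cancel]
      have hy' : a⁻¹ * y ∈ {g : G | ∃ x' ∈ X, g = a⁻¹ * x'} ∩ K := by
        refine ⟨⟨y, hy, rfl⟩, ?_⟩
        rw [hK]
        refine ⟨mul_mem (inv_mem A.2) Ye.2, ?_⟩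
        show q (A⁻¹ * Ye) = 1
        rw [map_mul, map_inv, hYA, inv_mul_cancel]
      have hone : b⁻¹ * (a⁻¹ * x) ∈ ({1} : Set G) := by
        rw [← hbI]
        refine ⟨⟨a⁻¹ * x, hx', rfl⟩, ⟨a⁻¹ * y, hy', ?_⟩⟩
        simpa [mul_inv_rev, mul_assoc] using hgy
      simp only [Set.mem_singleton_iff] at hone
      rw [mul_inv_rev, mul_assoc]
      exact hone
    · rintro rfl
      exact ⟨⟨a * b, habX, by group⟩, ⟨a * b, habX, by group⟩⟩
  obtain ⟨a, ha, hqa⟩ := hqXext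
  set Y : Set G := {g : G | ∃ x ∈ X, g = a⁻¹ * x} ∩ K with hY
  have himg : {g : G | ∃ x ∈ X, g = a⁻¹ * x} = (fun t => a⁻¹ * t) '' X := by
    ext g
    constructor
    · rintro ⟨x, hx, rfl⟩; exact ⟨x, hx, rfl⟩
    · rintro ⟨x, hx, rfl⟩; exact ⟨x, hx, rfl⟩
  have hYsub : Y ⊆ K := Set.inter_subset_right
  have hYsub' : Y ⊆ (fun t => a⁻¹ * t) '' X := by
    rw [hY, himg]; exact Set.inter_subset_left
  have hYfin : Y.Finite := (hXfin.image _).subset hYsub'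
  have hx1 : ∃ x1, ∃ hx1 : x1 ∈ X,
      q ⟨x1, Subgroup.subset_closure hx1⟩ ≠ q ⟨a, Subgroup.subset_closure ha⟩ := by
    by_contra hcon
    push_neg at hcon
    have h1 : q ⟨(1 : G), Subgroup.subset_closure hX1⟩ = 1 := by
      rw [show (⟨(1 : G), Subgroup.subset_closure hX1⟩ : Subgroup.closure X) = 1 from rfl,
        map_one]
    have hqa1 : q ⟨a, Subgroup.subset_closure ha⟩ = 1 := by rw [← hcon 1 hX1, h1]
    have hall : ∀ g (hg : g ∈ Subgroup.closure X), q ⟨g, hg⟩ = 1 := by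
      intro g hg
      induction hg using Subgroup.closure_induction with
      | mem x hx => rw [hcon x hx, hqa1]
      | one => exact h1
      | mul x y hx hy px py =>
          rw [show (⟨x * y, mul_mem hx hy⟩ : Subgroup.closure X) = ⟨x, hx⟩ * ⟨y, hy⟩ from rfl,
            map_mul, px, py, one_mul]
      | inv x hx px =>
          rw [show (⟨x⁻¹, inv_mem hx⟩ : Subgroup.closure X) = (⟨x, hx⟩ : Subgroup.closure X)⁻¹
            from rfl, map_inv, px, inv_one]
    obtain ⟨h0, hh0⟩ := exists_ne (1 : H)
    obtain ⟨s, hs⟩ := hq h0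
    exact hh0 (by rw [← hs]; exact hall s.1 s.2)
  obtain ⟨x1, hx1X, hx1ne⟩ := hx1
  have hx1notY : a⁻¹ * x1 ∉ Y := by
    intro hmem
    obtain ⟨-, hKm⟩ := hmem
    rw [hK] at hKm
    obtain ⟨hm, hq1⟩ := hKm
    apply hx1ne
    rw [show (⟨a⁻¹ * x1, hm⟩ : Subgroup.closure X)
      = (⟨a, Subgroup.subset_closure ha⟩ : Subgroup.closure X)⁻¹
        * ⟨x1, Subgroup.subset_closure hx1X⟩ from rfl, map_mul, map_inv] at hq1
    exact (inv_mul_eq_one.mp hq1).symm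
  have hss : Y ⊂ (fun t => a⁻¹ * t) '' X := by
    exact (Set.ssubset_iff_of_subset hYsub').mpr ⟨a⁻¹ * x1, ⟨x1, hx1X, rfl⟩, hx1notY⟩
  have hlt : Y.ncard < X.ncard := by
    calc Y.ncard < ((fun t => a⁻¹ * t) '' X).ncard :=
          Set.ncard_lt_ncard hss (hXfin.image _)
      _ = X.ncard := Set.ncard_image_of_injective _ (mul_right_injective _)
  obtain ⟨b, hb⟩ := hsmall Y hYsub hYfin hlt
  exact ⟨⟨a * b, key a ha hqa b hb⟩, key⟩
end

section
/- A group G has the unique product property if and only if for every nontrivial finitely generated subgroup F of G there exists a surjective homomorphism from F onto a nontrivial group with the unique product property. -/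
open Finset

private theorem burns_hale_key {G : Type u} [Group G]
    (hyp : ∀ F : Subgroup G, F.FG → F ≠ ⊥ →
        ∃ (H : Type u) (_ : Group H) (φ : F →* H),
          Function.Surjective φ ∧ Nontrivial H ∧ UniqueProds H) :
    ∀ n : ℕ, ∀ A B : Finset G, A.Nonempty → B.Nonempty → A.card + B.card ≤ n →
      ∃ a ∈ A, ∃ b ∈ B, UniqueMul A B a b := by
  intro n
  induction n with
  | zero =>
    intro A B hA hB hle
    have := hA.card_pos
    omega
  | succ n ih =>
    intro A B hA hB hcard
    classical
    obtain ⟨a₀, ha₀⟩ := hA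
    obtain ⟨b₀, hb₀⟩ := hB
    -- translated sets containing 1
    set A' : Finset G := A.image (fun a => a₀⁻¹ * a) with hA'def
    set B' : Finset G := B.image (fun b => b * b₀⁻¹) with hB'def
    have h1A' : (1 : G) ∈ A' := mem_image.2 ⟨a₀, ha₀, by group⟩
    have h1B' : (1 : G) ∈ B' := mem_image.2 ⟨b₀, hb₀, by group⟩
    have cardA' : A'.card = A.card := Finset.card_image_of_injective _
      (mul_right_injective a₀⁻¹)
    have cardB' : B'.card = B.card := Finset.card_image_of_injective _
      (mul_left_injective b₀⁻¹)
    -- the finitely generated subgroup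
    set S : Finset G := A' ∪ B' with hSdef
    set F : Subgroup G := Subgroup.closure (S : Set G) with hFdef
    have hFG : F.FG := ⟨S, rfl⟩
    -- transfer of uniqueness from translated sets back
    have transfer : (∃ a ∈ A', ∃ b ∈ B', UniqueMul A' B' a b) →
        ∃ a ∈ A, ∃ b ∈ B, UniqueMul A B a b := by
      rintro ⟨a₁, ha₁, b₁, hb₁, hu⟩
      obtain ⟨a₂, ha₂, ha₂e⟩ := mem_image.1 ha₁
      obtain ⟨b₂, hb₂, hb₂e⟩ := mem_image.1 hb₁
      refine ⟨a₂, ha₂, b₂, hb₂, ?_⟩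
      intro a b ha hb hab
      have hmem : (a₀⁻¹ * a) ∈ A' := mem_image.2 ⟨a, ha, rfl⟩
      have hmem' : (b * b₀⁻¹) ∈ B' := mem_image.2 ⟨b, hb, rfl⟩
      have heq : (a₀⁻¹ * a) * (b * b₀⁻¹) = a₁ * b₁ := by
        calc (a₀⁻¹ * a) * (b * b₀⁻¹) = a₀⁻¹ * (a * b) * b₀⁻¹ := by group
          _ = a₀⁻¹ * (a₂ * b₂) * b₀⁻¹ := by rw [hab]
          _ = (a₀⁻¹ * a₂) * (b₂ * b₀⁻¹) := by group
          _ = a₁ * b₁ := by rw [ha₂e, hb₂e]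
      obtain ⟨e1, e2⟩ := hu hmem hmem' heq
      exact ⟨mul_left_cancel (e1.trans ha₂e.symm),
        mul_right_cancel (e2.trans hb₂e.symm)⟩
    -- Case: F is trivial
    by_cases hFbot : F = ⊥
    · have hsub : (S : Set G) ⊆ {1} := by
        rw [← Subgroup.closure_eq_bot_iff]; exact hFbot
      have hA1 : A'.card ≤ 1 := by
        refine card_le_one.2 fun a ha b hb => ?_
        have := hsub (by simp [hSdef, ha] : a ∈ (S : Set G))
        have := hsub (by simp [hSdef, hb] : b ∈ (S : Set G))
        simp_all
      have hB1 : B'.card ≤ 1 := by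
        refine card_le_one.2 fun a ha b hb => ?_
        have := hsub (by simp [hSdef, ha] : a ∈ (S : Set G))
        have := hsub (by simp [hSdef, hb] : b ∈ (S : Set G))
        simp_all
      exact transfer (UniqueMul.of_card_le_one ⟨1, h1A'⟩ ⟨1, h1B'⟩ hA1 hB1)
    -- Case: F is nontrivial
    obtain ⟨H, _, φ, hφsurj, hHnt, hHup⟩ := hyp F hFG hFbot
    -- extend φ to a function on G
    set ψ : G → H := fun g => if h : g ∈ F then φ ⟨g, h⟩ else 1 with hψdef
    have hψ : ∀ g (h : g ∈ F), ψ g = φ ⟨g, h⟩ := fun g h => dif_pos h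
    have hA'F : ∀ a ∈ A', a ∈ F := fun a ha =>
      Subgroup.subset_closure (by simp [hSdef, ha])
    have hB'F : ∀ b ∈ B', b ∈ F := fun b hb =>
      Subgroup.subset_closure (by simp [hSdef, hb])
    have hψmul : ∀ {a b : G}, a ∈ F → b ∈ F → ψ (a * b) = ψ a * ψ b := by
      intro a b ha hb
      rw [hψ a ha, hψ b hb, hψ (a * b) (mul_mem ha hb), ← map_mul]
      rfl
    set AH : Finset H := A'.image ψ with hAHdef
    set BH : Finset H := B'.image ψ with hBHdef
    obtain ⟨x, hx, y, hy, hxy⟩ := hHup.uniqueMul_of_nonempty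
      (Finset.image_nonempty.2 ⟨1, h1A'⟩)
      (Finset.image_nonempty.2 ⟨1, h1B'⟩)
    set A₁ : Finset G := A'.filter (fun a => ψ a = x) with hA₁def
    set B₁ : Finset G := B'.filter (fun b => ψ b = y) with hB₁def
    have hA₁ne : A₁.Nonempty := by
      obtain ⟨a, ha, hae⟩ := mem_image.1 hx
      exact ⟨a, mem_filter.2 ⟨ha, hae⟩⟩
    have hB₁ne : B₁.Nonempty := by
      obtain ⟨b, hb, hbe⟩ := mem_image.1 hy
      exact ⟨b, mem_filter.2 ⟨hb, hbe⟩⟩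
    have hA₁sub : A₁ ⊆ A' := filter_subset _ _
    have hB₁sub : B₁ ⊆ B' := filter_subset _ _
    -- the filtered sets are strictly smaller
    have hlt : A₁.card + B₁.card ≤ n := by
      have h1 : A₁.card ≤ A'.card := card_le_card hA₁sub
      have h2 : B₁.card ≤ B'.card := card_le_card hB₁sub
      have hne : A₁ ≠ A' ∨ B₁ ≠ B' := by
        by_contra h
        push_neg at h
        obtain ⟨hAeq, hBeq⟩ := h
        -- then ψ is constant on A' and B', equal to 1
        have hx1 : x = 1 := by
          have h1A₁ : (1 : G) ∈ A₁ := by rw [hAeq]; exact h1A'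
          have : ψ 1 = x := (mem_filter.1 h1A₁).2
          rw [hψ 1 (one_mem F), show (⟨1, one_mem F⟩ : F) = 1 from rfl, map_one] at this
          exact this.symm
        have hy1 : y = 1 := by
          have h1B₁ : (1 : G) ∈ B₁ := by rw [hBeq]; exact h1B'
          have : ψ 1 = y := (mem_filter.1 h1B₁).2
          rw [hψ 1 (one_mem F), show (⟨1, one_mem F⟩ : F) = 1 from rfl, map_one] at this
          exact this.symm
        -- every generator is in the kernel of φ
        have hker : ∀ g : F, (g : G) ∈ S → φ g = 1 := by
          rintro ⟨g, hg⟩ hgS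
          rcases mem_union.1 hgS with h | h
          · have h' : g ∈ A₁ := by rw [hAeq]; exact h
            have := (mem_filter.1 h').2
            rw [hψ g hg] at this; rw [this, hx1]
          · have h' : g ∈ B₁ := by rw [hBeq]; exact h
            have := (mem_filter.1 h').2
            rw [hψ g hg] at this; rw [this, hy1]
        -- hence φ is trivial, contradicting surjectivity onto a nontrivial group
        have hFle : F ≤ (φ.ker.map F.subtype) := by
          refine (Subgroup.closure_le _).2 fun g hg => ?_
          have hgF : g ∈ F := Subgroup.subset_closure hg
          exact ⟨⟨g, hgF⟩, hker ⟨g, hgF⟩ hg, rfl⟩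
        have : ∀ g : F, φ g = 1 := by
          rintro ⟨g, hg⟩
          obtain ⟨⟨k, hkF⟩, hk, hke⟩ := hFle hg
          have : (⟨k, hkF⟩ : F) = ⟨g, hg⟩ := Subtype.ext hke
          rw [← this]; exact hk
        obtain ⟨h, hne⟩ := exists_ne (1 : H)
        obtain ⟨g, rfl⟩ := hφsurj h
        exact hne (this g)
      have : A₁.card < A'.card ∨ B₁.card < B'.card := by
        rcases hne with h | h
        · exact Or.inl (card_lt_card (hA₁sub.ssubset_of_ne h))
        · exact Or.inr (card_lt_card (hB₁sub.ssubset_of_ne h))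
      omega
    -- apply the induction hypothesis
    obtain ⟨a₁, ha₁, b₁, hb₁, hu₁⟩ := ih A₁ B₁ hA₁ne hB₁ne hlt
    refine transfer ⟨a₁, hA₁sub ha₁, b₁, hB₁sub hb₁, ?_⟩
    intro a b ha hb hab
    have hψa : ψ a ∈ AH := mem_image_of_mem ψ ha
    have hψb : ψ b ∈ BH := mem_image_of_mem ψ hb
    have ha₁' := mem_filter.1 ha₁
    have hb₁' := mem_filter.1 hb₁
    have hψeq : ψ a * ψ b = x * y := by
      rw [← hψmul (hA'F a ha) (hB'F b hb), hab,
        hψmul (hA'F a₁ ha₁'.1) (hB'F b₁ hb₁'.1), ha₁'.2, hb₁'.2]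
    obtain ⟨hax, hby⟩ := hxy hψa hψb hψeq
    exact hu₁ (mem_filter.2 ⟨ha, hax⟩) (mem_filter.2 ⟨hb, hby⟩) hab

/-- **Burns–Hale for UPP groups.** `G` has the unique product property iff every
nontrivial finitely generated subgroup surjects onto a nontrivial UPP group. -/
theorem uniqueProds_iff_locallyProjectable {G : Type u} [Group G] :
    UniqueProds G ↔
      ∀ F : Subgroup G, F.FG → F ≠ ⊥ →
        ∃ (H : Type u) (_ : Group H) (φ : F →* H),
          Function.Surjective φ ∧ Nontrivial H ∧ UniqueProds H := by
  constructor
  · intro hG F _ hFne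
    refine ⟨F, inferInstance, MonoidHom.id F, Function.surjective_id,
      (Subgroup.nontrivial_iff_ne_bot F).2 hFne, ?_⟩
    exact UniqueProds.of_injective_mulHom F.subtype.toMulHom Subtype.val_injective hG
  · intro hyp
    refine ⟨fun {A B} hA hB => ?_⟩
    exact burns_hale_key hyp (A.card + B.card) A B hA hB le_rfl
end

section
/- Suppose C is a class of groups closed under taking subgroups with the property that any group locally projectable to C belongs to C (i.e., C satisfies the Burns-Hale theorem). Then C is closed under extensions: if 1 → K → G → H → 1 is a short exact sequence with K, H ∈ C, then G ∈ C. -/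
/-- If a class of groups (closed under isomorphism and under taking subgroups)
satisfies the Burns–Hale theorem, then it is closed under extensions. -/
theorem closed_under_extensions_of_burnsHale
    (C : (H : Type u) → [inst : Group H] → Prop)
    (hiso : ∀ (H₁ H₂ : Type u) [Group H₁] [Group H₂], C H₁ → Nonempty (H₁ ≃* H₂) → C H₂)
    (hsub : ∀ (H : Type u) [Group H], C H → ∀ S : Subgroup H, C ↥S)
    (hBH : ∀ (G : Type u) [Group G],
      (∀ F : Subgroup G, F.FG → F ≠ ⊥ →
        ∃ (H : Type u) (_ : Group H) (φ : ↥F →* H),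
          Function.Surjective φ ∧ Nontrivial H ∧ C H) → C G)
    (K G H : Type u) [Group K] [Group G] [Group H]
    (ι : K →* G) (q : G →* H)
    (hι : Function.Injective ι) (hq : Function.Surjective q)
    (hex : ι.range = q.ker) (hCK : C K) (hCH : C H) : C G := by
  apply hBH
  intro F hFG hFne
  by_cases hmap : F.map q = ⊥
  · have hle : F ≤ ι.range := by
      rw [hex]
      intro x hx
      have hx' : q x ∈ F.map q := ⟨x, hx, rfl⟩
      rw [hmap, Subgroup.mem_bot] at hx'
      simpa [MonoidHom.mem_ker] using hx'
    have hmapS : (F.comap ι).map ι = F := by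
      rw [Subgroup.map_comap_eq, inf_eq_right.mpr hle]
    have e : ↥(F.comap ι) ≃* ↥F := (Subgroup.equivMapOfInjective (F.comap ι) ι hι).trans (MulEquiv.subgroupCongr hmapS)
    refine ⟨↥F, inferInstance, MonoidHom.id _, Function.surjective_id, ?_,
      hiso _ _ (hsub K hCK (F.comap ι)) ⟨e⟩⟩
    rwa [Subgroup.nontrivial_iff_ne_bot]
  · refine ⟨↥(F.map q), inferInstance, q.subgroupMap F, q.subgroupMap_surjective F, ?_,
      hsub H hCH _⟩
    rwa [Subgroup.nontrivial_iff_ne_bot]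
end

section
/- A group G is bi-orderable if and only if for every nontrivial finitely normally generated subgroup N of G there exists a group H and a surjective homomorphism φ : G → H such that φ(N) is nontrivial and admits a bi-ordering invariant under conjugation by all elements of H. -/
def BiOrderable (G : Type*) [Group G] : Prop :=
  ∃ r : G → G → Prop, IsStrictTotalOrder G r ∧
    (∀ f g h : G, r g h → r (f * g) (f * h)) ∧
    (∀ f g h : G, r g h → r (g * f) (h * f))

/-!
Burns–Hale style argument. A bi-ordering of `G` is the same thing as a positive cone invariant
under all conjugations (`a < b ↔ a⁻¹ * b ∈ P`). By compactness of `G → Bool` it suffices to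
choose, for each finite `F ⊆ G \ {1}`, signs `ε` such that `1` is not in the semigroup
generated by the conjugates of the `g ^ ε`, `g ∈ F`. Such signs are found by induction on `|F|`:
the hypothesis applied to the normal closure of `F` gives `φ` not killing all of `F`; the
elements with `φ g ≠ 1` are signed so that `φ (g ^ ε)` is positive, the others, which lie in
`ker φ`, by induction. A product of conjugates of the chosen `g ^ ε` then either has positive
image under `φ` or lies in the semigroup of the kernel part, so it is never `1`.
-/

open Set

theorem Pi.exists_forall_of_forall_finset {ι X : Type*} [Finite X]
    (p : Finset ι → (ι → X) → Prop) (h_anti : ∀ F F' σ, F ⊆ F' → p F' σ → p F σ)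
    (h_local : ∀ (F : Finset ι) σ τ, EqOn σ τ F → p F σ → p F τ) (h : ∀ F, ∃ σ, p F σ) :
    ∃ σ, ∀ F, p F σ := by
  classical
  let _ : TopologicalSpace X := ⊥
  have : DiscreteTopology X := ⟨rfl⟩
  have h_closed (F : Finset ι) : IsClosed {σ | p F σ} := by
    let restrict : (ι → X) → (F → X) := fun σ i => σ i
    have : {σ | p F σ} = restrict ⁻¹' (restrict '' {σ | p F σ}) := by
      refine (subset_preimage_image _ _).antisymm ?_
      rintro τ ⟨σ, hσ, hστ⟩
      exact h_local F σ τ (fun i hi => congrFun hστ ⟨i, hi⟩) hσ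
    rw [this]
    exact (isClosed_discrete _).preimage (continuous_pi fun i => continuous_apply _)
  obtain ⟨σ, hσ⟩ := IsCompact.nonempty_iInter_of_directed_nonempty_isCompact_isClosed
    (fun F => {σ | p F σ})
    (fun F F' => ⟨F ∪ F', fun σ => h_anti F _ σ Finset.subset_union_left,
      fun σ => h_anti F' _ σ Finset.subset_union_right⟩)
    h (fun F => (h_closed F).isCompact) h_closed
  exact ⟨σ, mem_iInter.mp hσ⟩

section

variable {G : Type*} [Group G]

namespace Subsemigroup

def normalClosure (s : Set G) : Subsemigroup G :=
  closure (Group.conjugatesOfSet s)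

theorem subset_normalClosure {s : Set G} : s ⊆ normalClosure s :=
  Group.subset_conjugatesOfSet.trans subset_closure

theorem normalClosure_mono {s t : Set G} (h : s ⊆ t) : normalClosure s ≤ normalClosure t :=
  closure_mono (Group.conjugatesOfSet_mono h)

theorem normalClosure_empty : normalClosure (∅ : Set G) = ⊥ := by
  simp [normalClosure, Group.conjugatesOfSet]

theorem normalClosure_le_normal {s : Set G} {N : Subgroup G} [N.Normal] (h : s ⊆ N) :
    normalClosure s ≤ N.toSubmonoid.toSubsemigroup :=
  closure_le.mpr (Group.conjugatesOfSet_subset h)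

theorem conj_mem_normalClosure {s : Set G} {x : G} (hx : x ∈ normalClosure s) (c : G) :
    c * x * c⁻¹ ∈ normalClosure s := by
  induction hx using closure_induction with
  | mem x hx => exact subset_closure (Group.conj_mem_conjugatesOfSet hx)
  | mul x y _ _ hx hy =>
    simpa only [mul_assoc, inv_mul_cancel_left] using mul_mem hx hy

theorem exists_finset_of_mem_normalClosure {s : Set G} {x : G} (hx : x ∈ normalClosure s) :
    ∃ t : Finset G, ↑t ⊆ s ∧ x ∈ normalClosure (t : Set G) := by
  classical
  induction hx using closure_induction with
  | mem x hx =>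
    obtain ⟨a, ha, hax⟩ := Group.mem_conjugatesOfSet_iff.mp hx
    exact ⟨{a}, by simpa using ha,
      subset_closure (Group.mem_conjugatesOfSet_iff.mpr ⟨a, by simp, hax⟩)⟩
  | mul x y _ _ hx hy =>
    obtain ⟨t, hts, hxt⟩ := hx
    obtain ⟨u, hus, hyu⟩ := hy
    refine ⟨t ∪ u, by simpa using union_subset hts hus, mul_mem ?_ ?_⟩
    · exact normalClosure_mono (by simp) hxt
    · exact normalClosure_mono (by simp) hyu

end Subsemigroup

open Subsemigroup

/-- Positive cone, relative to `M`, of an ordering invariant under all conjugations. -/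
structure IsConjInvariantCone (M P : Set G) : Prop where
  mul_mem : ∀ a ∈ P, ∀ b ∈ P, a * b ∈ P
  one_notMem : (1 : G) ∉ P
  mem_or_inv_mem : ∀ g ∈ M, g ≠ 1 → g ∈ P ∨ g⁻¹ ∈ P
  conj_mem : ∀ g ∈ P, ∀ h : G, h⁻¹ * g * h ∈ P

namespace IsConjInvariantCone

variable {M P : Set G}

theorem inv_notMem (hP : IsConjInvariantCone M P) {g : G} (hg : g ∈ P) : g⁻¹ ∉ P :=
  fun hg' => hP.one_notMem (by simpa using hP.mul_mem g hg _ hg')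

theorem mem_iff_inv_notMem (hP : IsConjInvariantCone M P) {g : G} (hgM : g ∈ M) (hg : g ≠ 1) :
    g ∈ P ↔ g⁻¹ ∉ P :=
  ⟨hP.inv_notMem, (hP.mem_or_inv_mem g hgM hg).resolve_right⟩

theorem mono (hP : IsConjInvariantCone M P) {M' : Set G} (h : M' ⊆ M) :
    IsConjInvariantCone M' P :=
  { hP with mem_or_inv_mem := fun g hg => hP.mem_or_inv_mem g (h hg) }

theorem inter_normal (hP : IsConjInvariantCone M P) (N : Subgroup G) [N.Normal] :
    IsConjInvariantCone (M ∩ N) (P ∩ N) where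
  mul_mem a ha b hb := ⟨hP.mul_mem a ha.1 b hb.1, N.mul_mem ha.2 hb.2⟩
  one_notMem h := hP.one_notMem h.1
  mem_or_inv_mem g hg hg1 := (hP.mem_or_inv_mem g hg.1 hg1).imp (⟨·, hg.2⟩) (⟨·, N.inv_mem hg.2⟩)
  conj_mem g hg h := ⟨hP.conj_mem g hg.1 h, by simpa using ‹N.Normal›.conj_mem g hg.2 h⁻¹⟩

theorem of_diff_one (hPM : P ⊆ M) (hmul : ∀ a ∈ P, ∀ b ∈ P, a * b ∈ P)
    (hsign : ∀ g ∈ M, g ≠ 1 → (g ∈ P ↔ g⁻¹ ∉ P)) (hconj : ∀ g ∈ P, ∀ h : G, h⁻¹ * g * h ∈ P) :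
    IsConjInvariantCone M (P \ {1}) where
  mul_mem a ha b hb := by
    refine ⟨hmul a ha.1 b hb.1, fun hab => ?_⟩
    rw [mem_singleton_iff, mul_eq_one_iff_eq_inv] at hab
    exact (hsign b (hPM hb.1) hb.2).mp hb.1 (hab ▸ ha.1)
  one_notMem h := h.2 rfl
  mem_or_inv_mem g hg hg1 := by
    by_cases hgP : g ∈ P
    · exact .inl ⟨hgP, hg1⟩
    · exact .inr ⟨not_not.mp (mt (hsign g hg hg1).mpr hgP), inv_ne_one.mpr hg1⟩
  conj_mem g hg h :=
    ⟨hconj g hg.1 h, fun e => hg.2 (by simpa [mul_assoc] using congrArg (h * · * h⁻¹) e)⟩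

end IsConjInvariantCone

theorem BiOrderable.exists_isConjInvariantCone (h : BiOrderable G) :
    ∃ P : Set G, IsConjInvariantCone univ P := by
  obtain ⟨r, hr, hleft, hright⟩ := h
  refine ⟨{g | r 1 g}, fun a ha b hb => ?_, irrefl_of r 1, fun g _ hg => ?_, fun g hg h => ?_⟩
  · exact trans_of r ha (by simpa using hleft a 1 b hb)
  · rcases trichotomous_of r 1 g with h | h | h
    · exact .inl h
    · exact absurd h.symm hg
    · exact .inr (by simpa using hleft g⁻¹ g 1 h)
  · have := hright h h⁻¹ (h⁻¹ * g) (by simpa using hleft h⁻¹ 1 g hg)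
    rwa [inv_mul_cancel] at this

theorem IsConjInvariantCone.biOrderable {P : Set G} (hP : IsConjInvariantCone univ P) :
    BiOrderable G := by
  refine ⟨fun a b => a⁻¹ * b ∈ P,
    { trichotomous := fun a b hab hba => ?_
      irrefl := fun a => by simpa using hP.one_notMem
      trans := fun a b c hab hbc => by simpa [mul_assoc] using hP.mul_mem _ hab _ hbc },
    fun f a b => by simp [mul_assoc], ?_⟩
  · by_contra hne
    rcases hP.mem_or_inv_mem (a⁻¹ * b) trivial (by simpa [inv_mul_eq_one] using hne) with h | h
    · exact hab h
    · exact hba (by simpa using h)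
  · intro f a b hab
    simpa [mul_assoc] using hP.conj_mem _ hab f

theorem biOrderable_iff_exists_isConjInvariantCone :
    BiOrderable G ↔ ∃ P : Set G, IsConjInvariantCone univ P :=
  ⟨BiOrderable.exists_isConjInvariantCone, fun ⟨_, hP⟩ => hP.biOrderable⟩

def signed (σ : G → Bool) (g : G) : G :=
  if σ g then g else g⁻¹

theorem signed_eq_or (σ : G → Bool) (g : G) : signed σ g = g ∨ signed σ g = g⁻¹ := by
  unfold signed; split <;> simp

theorem one_notMem_normalClosure_preimage_union {H : Type*} [Group H] {φ : G →* H}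
    {M Q : Set H} (hQ : IsConjInvariantCone M Q) {B : Set G} (hB : B ⊆ φ.ker)
    (h : (1 : G) ∉ normalClosure B) : (1 : G) ∉ normalClosure (φ ⁻¹' Q ∪ B) := by
  have hB_ker : ∀ x ∈ normalClosure B, φ x = 1 := fun x hx => normalClosure_le_normal hB hx
  suffices ∀ x ∈ normalClosure (φ ⁻¹' Q ∪ B), φ x ∈ Q ∨ x ∈ normalClosure B from
    fun h1 => (this 1 h1).elim (fun hQ1 => hQ.one_notMem (by simpa using hQ1)) h
  intro x hx
  induction hx using closure_induction with
  | mem x hx =>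
    obtain ⟨a, ha, hax⟩ := Group.mem_conjugatesOfSet_iff.mp hx
    obtain ⟨c, rfl⟩ := isConj_iff.mp hax
    rcases ha with ha | ha
    · exact .inl (by simpa using hQ.conj_mem _ ha (φ c)⁻¹)
    · exact .inr (conj_mem_normalClosure (subset_normalClosure ha) c)
  | mul x y _ _ hx hy =>
    rcases hx with hx | hx <;> rcases hy with hy | hy
    · exact .inl (by simpa using hQ.mul_mem _ hx _ hy)
    · exact .inl (by simpa [hB_ker y hy] using hx)
    · exact .inl (by simpa [hB_ker x hx] using hy)
    · exact .inr (mul_mem hx hy)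

theorem exists_signed_one_notMem_normalClosure
    (hyp : ∀ F : Finset G, 1 ∉ F → F.Nonempty → ∃ (H : Type*) (_ : Group H) (φ : G →* H)
      (Q : Set H), (∃ g ∈ F, φ g ≠ 1) ∧ IsConjInvariantCone (φ '' F) Q)
    (F : Finset G) (hF : 1 ∉ F) : ∃ σ : G → Bool, (1 : G) ∉ normalClosure (signed σ '' F) := by
  classical
  induction F using Finset.strongInduction with
  | H F ih =>
    rcases F.eq_empty_or_nonempty with rfl | hne
    · exact ⟨fun _ => true, by simp [normalClosure_empty, notMem_bot]⟩
    obtain ⟨H, _, φ, Q, ⟨g₀, hg₀F, hg₀⟩, hQ⟩ := hyp F hF hne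
    obtain ⟨σ₁, hσ₁⟩ := ih (F.filter (φ · = 1)) (Finset.filter_ssubset.mpr ⟨g₀, hg₀F, hg₀⟩)
      (fun h => hF (Finset.mem_of_mem_filter _ h))
    refine ⟨fun g => if φ g = 1 then σ₁ g else decide (φ g ∈ Q), fun h1 => ?_⟩
    refine one_notMem_normalClosure_preimage_union (φ := φ) hQ ?_ hσ₁ (normalClosure_mono ?_ h1)
    · rintro _ ⟨g, hg, rfl⟩
      rcases signed_eq_or σ₁ g with h | h <;> simp [h, (Finset.mem_filter.mp hg).2]
    · rintro _ ⟨g, hg, rfl⟩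
      by_cases hg1 : φ g = 1
      · exact .inr ⟨g, Finset.mem_filter.mpr ⟨hg, hg1⟩, by simp [signed, hg1]⟩
      · refine .inl ?_
        by_cases hgQ : φ g ∈ Q
        · simp [signed, hg1, hgQ]
        · have := (hQ.mem_or_inv_mem _ ⟨g, hg, rfl⟩ hg1).resolve_left hgQ
          simpa [signed, hg1, hgQ]

theorem exists_isConjInvariantCone_of_forall_finset
    (h : ∀ F : Finset G, 1 ∉ F → ∃ σ : G → Bool, (1 : G) ∉ normalClosure (signed σ '' F)) :
    ∃ P : Set G, IsConjInvariantCone univ P := by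
  classical
  obtain ⟨σ, hσ⟩ := Pi.exists_forall_of_forall_finset
    (fun F σ => (1 : G) ∉ normalClosure (signed σ '' (F.erase 1)))
    (fun F F' σ hFF' h' => fun h1 => h' (normalClosure_mono
      (image_mono (Finset.coe_subset.mpr (Finset.erase_subset_erase 1 hFF'))) h1))
    (fun F σ τ hστ h' => by
      have : signed σ '' (F.erase 1 : Set G) = signed τ '' (F.erase 1 : Set G) :=
        image_congr fun g hg => by simp only [signed, hστ (Finset.mem_of_mem_erase hg)]
      rwa [← this])
    (fun F => h _ (Finset.notMem_erase 1 F))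
  refine ⟨normalClosure (signed σ '' {g | g ≠ 1}), ⟨fun a ha b hb => mul_mem ha hb, fun h1 => ?_,
    fun g _ hg => ?_, fun g hg h => by simpa using conj_mem_normalClosure hg h⁻¹⟩⟩
  · obtain ⟨t, hts, ht⟩ := exists_finset_of_mem_normalClosure h1
    obtain ⟨s, hs, rfl⟩ := Finset.subset_set_image_iff.mp hts
    have hs1 : s.erase 1 = s := Finset.erase_eq_of_notMem (fun h1 => hs h1 rfl)
    exact hσ s (by rwa [hs1, ← Finset.coe_image])
  · have hmem : signed σ g ∈ normalClosure (signed σ '' {g | g ≠ 1}) :=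
      subset_normalClosure (mem_image_of_mem _ hg)
    rcases signed_eq_or σ g with h | h <;> rw [h] at hmem
    · exact .inl hmem
    · exact .inr hmem

end

/-- **Burns–Hale analog for bi-orderable groups.** `G` is bi-orderable iff for every
nontrivial finitely normally generated subgroup `N` there is a surjection
`φ : G → H` with `φ(N)` nontrivial and bi-orderable by an ordering (given here by
its positive cone `P`) invariant under conjugation by all of `H`. -/
theorem biOrderable_iff {G : Type u} [Group G] :
    BiOrderable G ↔
      ∀ N : Subgroup G, (∃ S : Set G, S.Finite ∧ N = Subgroup.normalClosure S) →
        N ≠ ⊥ →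
        ∃ (H : Type u) (_ : Group H) (φ : G →* H), Function.Surjective φ ∧
          Subgroup.map φ N ≠ ⊥ ∧
          ∃ P : Set H, P ⊆ (Subgroup.map φ N : Set H) ∧
            (∀ a ∈ P, ∀ b ∈ P, a * b ∈ P) ∧
            (∀ g : H, g ∈ Subgroup.map φ N → g ≠ 1 → (g ∈ P ↔ g⁻¹ ∉ P)) ∧
            (∀ g ∈ P, ∀ h : H, h⁻¹ * g * h ∈ P) := by
  rw [biOrderable_iff_exists_isConjInvariantCone]
  constructor
  · rintro ⟨P, hP⟩ N ⟨S, -, rfl⟩ hN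
    have hPN := (hP.inter_normal (Subgroup.normalClosure S)).mono fun g hg => ⟨trivial, hg⟩
    refine ⟨G, inferInstance, MonoidHom.id G, Function.surjective_id, by rwa [Subgroup.map_id], ?_⟩
    rw [Subgroup.map_id]
    exact ⟨_, inter_subset_right, hPN.mul_mem, fun g hg => hPN.mem_iff_inv_notMem hg, hPN.conj_mem⟩
  · refine fun hyp => exists_isConjInvariantCone_of_forall_finset
      (exists_signed_one_notMem_normalClosure fun F hF hne => ?_)
    have hN : Subgroup.normalClosure (F : Set G) ≠ ⊥ := fun h => by
      obtain ⟨g, hg⟩ := hne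
      have hg1 : g = 1 := Subgroup.normalClosure_eq_bot_iff.mp h hg
      exact hF (hg1 ▸ hg)
    obtain ⟨H, _, φ, -, hmap, P, hPN, hmul, hsign, hconj⟩ := hyp _ ⟨F, F.finite_toSet, rfl⟩ hN
    have hF_ker : ∃ g ∈ F, φ g ≠ 1 := by
      by_contra! h
      exact hmap ((Subgroup.map_eq_bot_iff _).mpr (Subgroup.normalClosure_le_normal h))
    have hF_map : φ '' F ⊆ Subgroup.map φ (Subgroup.normalClosure F) := by
      rw [Subgroup.coe_map]
      exact image_mono Subgroup.subset_normalClosure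
    exact ⟨H, _, φ, P \ {1}, hF_ker,
      (IsConjInvariantCone.of_diff_one hPN hmul hsign hconj).mono hF_map⟩
end

section
/- A group G is bi-orderable if and only if for every finite subset {x_1, ..., x_n} of G not containing the identity, there exist signs ε_i ∈ {±1} such that the normal subsemigroup of G generated by x_1^{ε_1}, ..., x_n^{ε_n} does not contain the identity. -/
/-- Compactness of `α → β` for finite discrete `β` (Tychonoff): each `C s` is closed because
membership in it depends only on the finitely many coordinates in `s`. -/
theorem exists_forall_mem_of_antitone_of_eqOn {α β : Type*} [Finite β]
    (C : Finset α → Set (α → β)) (hC : Antitone C)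
    (hloc : ∀ s, ∀ f ∈ C s, ∀ f', Set.EqOn f f' s → f' ∈ C s)
    (hne : ∀ s, (C s).Nonempty) : ∃ f, ∀ s, f ∈ C s := by
  let _ : TopologicalSpace β := ⊥
  have _ : DiscreteTopology β := ⟨rfl⟩
  have hclosed : ∀ s, IsClosed (C s) := by
    intro s
    let res : (α → β) → (s → β) := fun f x => f x
    have hC_eq : C s = res ⁻¹' (res '' C s) := by
      refine (Set.subset_preimage_image res _).antisymm ?_
      rintro f ⟨f', hf', hres⟩
      exact hloc s f' hf' f fun x hx => congrFun hres ⟨x, hx⟩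
    rw [hC_eq]
    exact (isClosed_discrete _).preimage (continuous_pi fun x => continuous_apply _)
  obtain ⟨f, hf⟩ := IsCompact.nonempty_iInter_of_directed_nonempty_isCompact_isClosed
    C hC.directed_ge hne (fun s => (hclosed s).isCompact) hclosed
  exact ⟨f, Set.mem_iInter.mp hf⟩

section BiOrderCone

variable {G : Type*} [Group G]

/-- The positive cone `{g | 1 < g}` of a bi-order, which is recovered as `a < b ↔ a⁻¹ * b ∈ P`. -/
structure IsBiOrderCone (P : Subsemigroup G) : Prop where
  one_notMem : (1 : G) ∉ P
  conj_mem : ∀ a ∈ P, ∀ g : G, g * a * g⁻¹ ∈ P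
  mem_or_inv_mem : ∀ x : G, x ≠ 1 → x ∈ P ∨ x⁻¹ ∈ P

theorem BiOrderable.exists_isBiOrderCone (h : BiOrderable G) :
    ∃ P : Subsemigroup G, IsBiOrderCone P := by
  obtain ⟨r, hr, hleft, hright⟩ := h
  refine ⟨{ carrier := {g | r 1 g}
            mul_mem' := fun {a b} ha hb => _root_.trans hb (by simpa using hright b 1 a ha) },
    ⟨irrefl_of r 1, fun a ha g => ?_, fun x hx => ?_⟩⟩
  · simpa using hright g⁻¹ _ _ (hleft g 1 a ha)
  · rcases trichotomous_of r 1 x with hlt | heq | hgt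
    · exact Or.inl hlt
    · exact absurd heq.symm hx
    · exact Or.inr (by simpa using hleft x⁻¹ x 1 hgt)

theorem IsBiOrderCone.biOrderable {P : Subsemigroup G} (hP : IsBiOrderCone P) :
    BiOrderable G := by
  refine ⟨fun a b => a⁻¹ * b ∈ P,
    { trichotomous := fun a b hab hba => ?_
      irrefl := fun a haa => hP.one_notMem (by rwa [inv_mul_cancel] at haa)
      trans := fun a b c hab hbc => by simpa [mul_assoc] using mul_mem hab hbc },
    fun f g h hgh => by simpa [mul_assoc] using hgh,
    fun f g h hgh => by simpa [mul_assoc] using hP.conj_mem _ hgh f⁻¹⟩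
  by_contra hne
  refine (hP.mem_or_inv_mem (a⁻¹ * b) ?_).elim hab fun h => hba (by simpa using h)
  rwa [Ne, inv_mul_eq_one]

theorem biOrderable_iff_exists_isBiOrderCone :
    BiOrderable G ↔ ∃ P : Subsemigroup G, IsBiOrderCone P :=
  ⟨BiOrderable.exists_isBiOrderCone, fun ⟨_, hP⟩ => hP.biOrderable⟩

theorem Subsemigroup.conj_mem_closure {S : Set G}
    (hS : ∀ a ∈ S, ∀ g : G, g * a * g⁻¹ ∈ S) {a : G} (ha : a ∈ closure S) (g : G) :
    g * a * g⁻¹ ∈ closure S := by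
  induction ha using closure_induction with
  | mem x hx => exact subset_closure (hS x hx g)
  | mul x y _ _ hx hy =>
    have hconj : g * (x * y) * g⁻¹ = (g * x * g⁻¹) * (g * y * g⁻¹) := by group
    exact hconj ▸ mul_mem hx hy

open Subsemigroup

/-- `closure (signedConjugates X ε)` is the normal subsemigroup `NS {x ^ ε x | x ∈ X}`. -/
def signedConjugates (X : Set G) (ε : G → ℤˣ) : Set G :=
  {h | ∃ g : G, ∃ x ∈ X, h = g * x ^ (ε x : ℤ) * g⁻¹}

theorem signedConjugates_mono {X Y : Set G} (hXY : X ⊆ Y) (ε : G → ℤˣ) :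
    signedConjugates X ε ⊆ signedConjugates Y ε :=
  fun _ ⟨g, x, hx, h⟩ => ⟨g, x, hXY hx, h⟩

theorem signedConjugates_congr {X : Set G} {ε ε' : G → ℤˣ} (h : Set.EqOn ε ε' X) :
    signedConjugates X ε = signedConjugates X ε' := by
  ext a
  constructor <;> rintro ⟨g, x, hx, rfl⟩ <;> exact ⟨g, x, hx, by rw [h hx]⟩

theorem conj_mem_signedConjugates {X : Set G} {ε : G → ℤˣ} {a : G}
    (ha : a ∈ signedConjugates X ε) (g : G) : g * a * g⁻¹ ∈ signedConjugates X ε := by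
  obtain ⟨g', x, hx, rfl⟩ := ha
  exact ⟨g * g', x, hx, by group⟩

theorem pow_mem_signedConjugates {X : Set G} {x : G} (hx : x ∈ X) (ε : G → ℤˣ) :
    x ^ (ε x : ℤ) ∈ signedConjugates X ε :=
  ⟨1, x, hx, by group⟩

theorem exists_finset_of_mem_closure_signedConjugates {X : Set G} {ε : G → ℤˣ} {a : G}
    (ha : a ∈ closure (signedConjugates X ε)) :
    ∃ s : Finset G, ↑s ⊆ X ∧ a ∈ closure (signedConjugates s ε) := by
  classical
  induction ha using closure_induction with
  | mem a ha =>
    obtain ⟨g, x, hx, rfl⟩ := ha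
    exact ⟨{x}, by simpa using hx, subset_closure ⟨g, x, by simp, rfl⟩⟩
  | mul a b _ _ ha hb =>
    obtain ⟨s, hsX, has⟩ := ha
    obtain ⟨t, htX, hbt⟩ := hb
    have hmono {u : Finset G} (hu : u ⊆ s ∪ t) :=
      closure_mono (signedConjugates_mono (Finset.coe_subset.mpr hu) ε)
    exact ⟨s ∪ t, by simpa using And.intro hsX htX,
      mul_mem (hmono Finset.subset_union_left has) (hmono Finset.subset_union_right hbt)⟩

theorem IsBiOrderCone.closure_signedConjugates_le {P : Subsemigroup G} [DecidablePred (· ∈ P)]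
    (hP : IsBiOrderCone P) {X : Set G} (hX : (1 : G) ∉ X) :
    closure (signedConjugates X fun x => if x ∈ P then 1 else -1) ≤ P := by
  refine closure_le.mpr ?_
  rintro _ ⟨g, x, hx, rfl⟩
  refine hP.conj_mem _ ?_ g
  by_cases hxP : x ∈ P
  · simp [hxP]
  · simpa [hxP] using hP.mem_or_inv_mem x (ne_of_mem_of_not_mem hx hX)

theorem isBiOrderCone_closure_signedConjugates (ε : G → ℤˣ)
    (h : ∀ s : Finset G, (1 : G) ∉ s → (1 : G) ∉ closure (signedConjugates s ε)) :
    IsBiOrderCone (closure (signedConjugates ({1}ᶜ : Set G) ε)) where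
  one_notMem h1 := by
    obtain ⟨s, hs, h1s⟩ := exists_finset_of_mem_closure_signedConjugates h1
    exact h s (fun h1 => hs h1 rfl) h1s
  conj_mem a ha g := conj_mem_closure (fun _ hb => conj_mem_signedConjugates hb) ha g
  mem_or_inv_mem x hx := by
    have hpow := subset_closure (pow_mem_signedConjugates (Set.mem_compl_singleton_iff.mpr hx) ε)
    rcases Int.units_eq_one_or (ε x) with hε | hε <;> rw [hε] at hpow
    · exact Or.inl (by simpa using hpow)
    · exact Or.inr (by simpa using hpow)

end BiOrderCone

/-- `G` is bi-orderable iff for every finite subset not containing the identity one can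
choose signs so that the normal subsemigroup generated by the signed elements
avoids the identity. -/
theorem biOrderable_iff_signs {G : Type*} [Group G] :
    BiOrderable G ↔
      ∀ s : Finset G, (1 : G) ∉ s →
        ∃ ε : G → ℤˣ, (1 : G) ∉ Subsemigroup.closure
          {h : G | ∃ g : G, ∃ x ∈ s, h = g * x ^ ((ε x : ℤ)) * g⁻¹} := by
  rw [biOrderable_iff_exists_isBiOrderCone]
  constructor
  · rintro ⟨P, hP⟩ s hs
    classical
    exact ⟨_, fun h1 => hP.one_notMem (hP.closure_signedConjugates_le hs h1)⟩
  · intro H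
    classical
    let C (s : Finset G) : Set (G → ℤˣ) :=
      {ε | (1 : G) ∉ Subsemigroup.closure (signedConjugates ↑(s.erase 1) ε)}
    have hC : Antitone C := fun s t hst ε hε h1 => hε <| Subsemigroup.closure_mono
      (signedConjugates_mono (Finset.coe_subset.mpr (Finset.erase_subset_erase 1 hst)) ε) h1
    have hloc (s : Finset G) : ∀ ε ∈ C s, ∀ ε', Set.EqOn ε ε' s → ε' ∈ C s :=
      fun ε hε ε' h => by
        rwa [Set.mem_ofPred, ← signedConjugates_congr (h.mono (Finset.erase_subset 1 s))]
    obtain ⟨ε, hε⟩ := exists_forall_mem_of_antitone_of_eqOn C hC hloc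
      fun s => H (s.erase 1) (Finset.notMem_erase 1 s)
    refine ⟨_, isBiOrderCone_closure_signedConjugates ε fun s hs => ?_⟩
    simpa only [C, Finset.erase_eq_of_notMem hs, Set.mem_ofPred] using hε s
end

section
/- A finitely generated group G (with fixed finite generating set) is circularly orderable if and only if for every k ≥ 1 it admits a length-k circular pre-order, i.e., a function c : G_k³ → {0, ±1} on the set G_k of words of length at most k that (1) vanishes exactly on triples with a repeated coordinate, (2) does not violate the circular cocycle condition, and (3) satisfies c(g·t) = c(t) whenever g ∈ G_k, t ∈ G_k³ and g·t ∈ G_k³. -/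
/-- `c` is a (left-invariant) circular ordering of `G`. -/
def IsCircularOrdering {G : Type*} [Group G] (c : G → G → G → ℤ) : Prop :=
  (∀ x y z : G, c x y z = 0 ∨ c x y z = 1 ∨ c x y z = -1) ∧
  (∀ x y z : G, c x y z = 0 ↔ (x = y ∨ x = z ∨ y = z)) ∧
  (∀ x₁ x₂ x₃ x₄ : G, c x₁ x₂ x₃ - c x₁ x₂ x₄ + c x₁ x₃ x₄ - c x₂ x₃ x₄ = 0) ∧
  (∀ g x y z : G, c (g * x) (g * y) (g * z) = c x y z)

/-- A group is circularly orderable if it admits a circular ordering. -/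
def CircularlyOrderable (G : Type*) [Group G] : Prop :=
  ∃ c : G → G → G → ℤ, IsCircularOrdering c

/-- The ball of radius `k` with respect to the generating set `S`: all products of at
most `k` elements of `S ∪ S⁻¹` (in particular the identity). -/
def genBall {G : Type*} [Group G] (S : Finset G) (k : ℕ) : Set G :=
  {g : G | ∃ l : List G, l.length ≤ k ∧ (∀ x ∈ l, x ∈ S ∨ x⁻¹ ∈ S) ∧ l.prod = g}

private theorem genBall_mono {G : Type*} [Group G] (S : Finset G) {k k' : ℕ} (h : k ≤ k') :
    genBall S k ⊆ genBall S k' := by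
  rintro g ⟨l, hl, hmem, hprod⟩
  exact ⟨l, hl.trans h, hmem, hprod⟩

/-- A finitely generated group (with fixed finite generating set `S`) is circularly
orderable iff it admits a length-`k` circular pre-order for every `k ≥ 1`. -/
theorem circularlyOrderable_iff_preorders {G : Type*} [Group G]
    (S : Finset G) (hS : Subgroup.closure (S : Set G) = ⊤) :
    CircularlyOrderable G ↔
      ∀ k : ℕ, 1 ≤ k → ∃ c : G → G → G → ℤ,
        (∀ x ∈ genBall S k, ∀ y ∈ genBall S k, ∀ z ∈ genBall S k,
          (c x y z = 0 ∨ c x y z = 1 ∨ c x y z = -1) ∧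
          (c x y z = 0 ↔ (x = y ∨ x = z ∨ y = z))) ∧
        (∀ x₁ ∈ genBall S k, ∀ x₂ ∈ genBall S k, ∀ x₃ ∈ genBall S k, ∀ x₄ ∈ genBall S k,
          c x₁ x₂ x₃ - c x₁ x₂ x₄ + c x₁ x₃ x₄ - c x₂ x₃ x₄ = 0) ∧
        (∀ g ∈ genBall S k, ∀ x ∈ genBall S k, ∀ y ∈ genBall S k, ∀ z ∈ genBall S k,
          g * x ∈ genBall S k → g * y ∈ genBall S k → g * z ∈ genBall S k →
            c (g * x) (g * y) (g * z) = c x y z) := by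
  constructor
  · rintro ⟨c, h1, h2, h3, h4⟩ k _
    exact ⟨c, fun x _ y _ z _ => ⟨h1 x y z, h2 x y z⟩,
      fun a _ b _ u _ v _ => h3 a b u v,
      fun g _ x _ y _ z _ _ _ _ => h4 g x y z⟩
  · intro h
    choose d hd1 hd2 hd3 using fun k : ℕ => h (k + 1) (Nat.le_add_left 1 k)
    -- every element is eventually in the ball
    have hmem : ∀ g : G, ∀ᶠ k in Filter.atTop, g ∈ genBall S (k + 1) := by
      intro g
      have hg : g ∈ Submonoid.closure ((S : Set G) ∪ (S : Set G)⁻¹) := by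
        rw [← Subgroup.closure_toSubmonoid, hS]; trivial
      obtain ⟨l, hl, hprod⟩ := Submonoid.exists_list_of_mem_closure hg
      filter_upwards [Filter.eventually_ge_atTop l.length] with k hk
      refine ⟨l, hk.trans (Nat.le_succ k), fun x hx => ?_, hprod⟩
      rcases hl x hx with h' | h'
      · exact Or.inl h'
      · exact Or.inr (Set.mem_inv.mp h')
    set U : Ultrafilter ℕ := Ultrafilter.of Filter.atTop with hUdef
    have hU : (U : Filter ℕ) ≤ Filter.atTop := Ultrafilter.of_le _
    have hmemU : ∀ g : G, {k | g ∈ genBall S (k + 1)} ∈ U := fun g => hU (hmem g)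
    classical
    set c : G → G → G → ℤ := fun x y z =>
      if {k | d k x y z = 0} ∈ U then 0
      else if {k | d k x y z = 1} ∈ U then 1 else -1 with hc
    have hagree : ∀ x y z : G, {k | d k x y z = c x y z} ∈ U := by
      intro x y z
      have hA : {k | d k x y z = 0 ∨ d k x y z = 1 ∨ d k x y z = -1} ∈ U := by
        filter_upwards [hmemU x, hmemU y, hmemU z] with k hx hy hz
        exact (hd1 k x hx y hy z hz).1
      by_cases h0 : {k | d k x y z = 0} ∈ U
      · simp [hc, h0]
      · by_cases h1 : {k | d k x y z = 1} ∈ U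
        · simp [hc, h0, h1]
        · have h0' : {k | d k x y z = 0}ᶜ ∈ U := Ultrafilter.compl_mem_iff_notMem.mpr h0
          have h1' : {k | d k x y z = 1}ᶜ ∈ U := Ultrafilter.compl_mem_iff_notMem.mpr h1
          have : {k | d k x y z = -1} ∈ U := by
            filter_upwards [hA, h0', h1'] with k hk hk0 hk1
            rcases hk with h' | h' | h'
            · exact absurd h' hk0
            · exact absurd h' hk1
            · exact h'
          simpa [hc, h0, h1] using this
    refine ⟨c, ?_, ?_, ?_, ?_⟩
    · intro x y z
      obtain ⟨k, hk, hx, hy, hz⟩ :=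
        Ultrafilter.nonempty_of_mem
          (Filter.inter_mem (hagree x y z)
            (Filter.inter_mem (hmemU x) (Filter.inter_mem (hmemU y) (hmemU z))))
      rw [← hk]
      exact (hd1 k x hx y hy z hz).1
    · intro x y z
      obtain ⟨k, hk, hx, hy, hz⟩ :=
        Ultrafilter.nonempty_of_mem
          (Filter.inter_mem (hagree x y z)
            (Filter.inter_mem (hmemU x) (Filter.inter_mem (hmemU y) (hmemU z))))
      rw [← hk]
      exact (hd1 k x hx y hy z hz).2
    · intro x₁ x₂ x₃ x₄
      obtain ⟨k, h123, h124, h134, h234, h1, h2, h3, h4⟩ :=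
        Ultrafilter.nonempty_of_mem
          (Filter.inter_mem (hagree x₁ x₂ x₃) (Filter.inter_mem (hagree x₁ x₂ x₄)
            (Filter.inter_mem (hagree x₁ x₃ x₄) (Filter.inter_mem (hagree x₂ x₃ x₄)
              (Filter.inter_mem (hmemU x₁) (Filter.inter_mem (hmemU x₂)
                (Filter.inter_mem (hmemU x₃) (hmemU x₄))))))))
      rw [← h123, ← h124, ← h134, ← h234]
      exact hd2 k x₁ h1 x₂ h2 x₃ h3 x₄ h4
    · intro g x y z
      obtain ⟨k, ha1, ha2, hg, hx, hy, hz, hgx, hgy, hgz⟩ :=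
        Ultrafilter.nonempty_of_mem
          (Filter.inter_mem (hagree (g * x) (g * y) (g * z)) (Filter.inter_mem (hagree x y z)
            (Filter.inter_mem (hmemU g) (Filter.inter_mem (hmemU x)
              (Filter.inter_mem (hmemU y) (Filter.inter_mem (hmemU z)
                (Filter.inter_mem (hmemU (g * x)) (Filter.inter_mem (hmemU (g * y))
                  (hmemU (g * z))))))))))
      rw [← ha1, ← ha2]
      exact hd3 k g hg x hx y hy z hz hgx hgy hgz
end

section
/- A group G is circularly orderable if and only if for every finite subset X of G there exists a surjective homomorphism φ from ⟨X⟩ onto a circularly orderable group C and an antisymmetric subsemigroup S of ker(φ) such that X^{-1}X ∩ ker(φ) ⊆ S ∪ S^{-1} ∪ {id}. -/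
/-!
For a finite `X`, order `⟨X⟩` lexicographically: first by the circular order of the image in `C`,
then, inside a fibre of `φ`, by the partial order `x < y ↔ x⁻¹ * y ∈ S`. Since `S ⊆ ker φ`, the
second part is the coboundary of the antisymmetric sign function of this partial order, so the
sum is a left-invariant cocycle; it is nondegenerate on `X` because `S` compares any two elements
of `X` in the same fibre. A circular ordering is determined by its values on triples, each in
`{0, ±1}`, so an ultrafilter limit of these local orderings over all finite `X` is a circular
ordering of `G`.
-/

section

variable {G H C : Type*} [Group G] [Group H] [Group C]

def IsCircularOrderingOn (F : Set G) (c : G → G → G → ℤ) : Prop :=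
  (∀ x ∈ F, ∀ y ∈ F, ∀ z ∈ F, c x y z = 0 ∨ c x y z = 1 ∨ c x y z = -1) ∧
  (∀ x ∈ F, ∀ y ∈ F, ∀ z ∈ F, c x y z = 0 ↔ (x = y ∨ x = z ∨ y = z)) ∧
  (∀ x₁ ∈ F, ∀ x₂ ∈ F, ∀ x₃ ∈ F, ∀ x₄ ∈ F,
    c x₁ x₂ x₃ - c x₁ x₂ x₄ + c x₁ x₃ x₄ - c x₂ x₃ x₄ = 0) ∧
  (∀ g ∈ F, ∀ x ∈ F, ∀ y ∈ F, ∀ z ∈ F, c (g * x) (g * y) (g * z) = c x y z)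

theorem IsCircularOrdering.comap {c : G → G → G → ℤ} (hc : IsCircularOrdering c) (f : H →* G)
    (hf : Function.Injective f) : IsCircularOrdering fun x y z => c (f x) (f y) (f z) := by
  refine ⟨fun x y z => hc.1 _ _ _, fun x y z => ?_, fun x₁ x₂ x₃ x₄ => hc.2.2.1 _ _ _ _,
    fun g x y z => ?_⟩
  · simp only [hc.2.1, hf.eq_iff]
  · simp only [map_mul, hc.2.2.2]

theorem circularlyOrderable_of_forall_finset
    (h : ∀ F : Finset G, ∃ c : G → G → G → ℤ, IsCircularOrderingOn (F : Set G) c) :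
    CircularlyOrderable G := by
  classical
  choose c hc using h
  let U := Ultrafilter.of (Filter.atTop : Filter (Finset G))
  have hU : ∀ F : Finset G, ∀ᶠ X in (U : Filter (Finset G)), F ⊆ X := fun F =>
    Ultrafilter.of_le _ (Filter.eventually_ge_atTop F)
  have hval : ∀ x y z : G, ∀ᶠ X in (U : Filter (Finset G)),
      c X x y z = 0 ∨ c X x y z = 1 ∨ c X x y z = -1 := fun x y z =>
    (hU {x, y, z}).mono fun X hX => (hc X).1 x (hX (by simp)) y (hX (by simp)) z (hX (by simp))
  have hlim : ∀ x y z : G, ∃ n : ℤ, ∀ᶠ X in (U : Filter (Finset G)), c X x y z = n := by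
    intro x y z
    rcases Ultrafilter.eventually_or.1 (hval x y z) with h | h
    · exact ⟨0, h⟩
    rcases Ultrafilter.eventually_or.1 h with h | h
    exacts [⟨1, h⟩, ⟨-1, h⟩]
  choose c₀ hc₀ using hlim
  refine ⟨c₀, fun x y z => ?_, fun x y z => ?_, fun x₁ x₂ x₃ x₄ => ?_, fun g x y z => ?_⟩
  · obtain ⟨X, h, hX⟩ := ((hc₀ x y z).and (hval x y z)).exists
    rwa [← h]
  · obtain ⟨X, h, hX⟩ := ((hc₀ x y z).and (hU {x, y, z})).exists
    rw [← h]
    exact (hc X).2.1 x (hX (by simp)) y (hX (by simp)) z (hX (by simp))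
  · obtain ⟨X, ⟨⟨⟨h₁, h₂⟩, h₃⟩, h₄⟩, hX⟩ := ((((hc₀ x₁ x₂ x₃).and (hc₀ x₁ x₂ x₄)).and
      (hc₀ x₁ x₃ x₄)).and (hc₀ x₂ x₃ x₄)).and (hU {x₁, x₂, x₃, x₄}) |>.exists
    rw [← h₁, ← h₂, ← h₃, ← h₄]
    exact (hc X).2.2.1 x₁ (hX (by simp)) x₂ (hX (by simp)) x₃ (hX (by simp)) x₄ (hX (by simp))
  · obtain ⟨X, ⟨h₁, h₂⟩, hX⟩ :=
      (((hc₀ (g * x) (g * y) (g * z)).and (hc₀ x y z)).and (hU {g, x, y, z})).exists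
    rw [← h₁, ← h₂]
    exact (hc X).2.2.2 g (hX (by simp)) x (hX (by simp)) y (hX (by simp)) z (hX (by simp))

section extend

variable {K : Subgroup G}

open scoped Classical in
noncomputable def extendCocycle (c : K → K → K → ℤ) (x y z : G) : ℤ :=
  if h : x ∈ K ∧ y ∈ K ∧ z ∈ K then c ⟨x, h.1⟩ ⟨y, h.2.1⟩ ⟨z, h.2.2⟩ else 0

theorem extendCocycle_coe (c : K → K → K → ℤ) (x y z : K) :
    extendCocycle c x y z = c x y z := by
  simp [extendCocycle]

theorem IsCircularOrderingOn.extendCocycle {c : K → K → K → ℤ} {F : Set G} (hFK : F ⊆ K)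
    (hc : IsCircularOrderingOn (Subtype.val ⁻¹' F) c) :
    IsCircularOrderingOn F (extendCocycle c) := by
  refine ⟨fun x hx y hy z hz => ?_, fun x hx y hy z hz => ?_,
    fun x₁ h₁ x₂ h₂ x₃ h₃ x₄ h₄ => ?_, fun g hg x hx y hy z hz => ?_⟩
  · lift x to K using hFK hx; lift y to K using hFK hy; lift z to K using hFK hz
    simpa only [extendCocycle_coe] using hc.1 x hx y hy z hz
  · lift x to K using hFK hx; lift y to K using hFK hy; lift z to K using hFK hz
    simpa only [extendCocycle_coe, Subtype.coe_inj] using hc.2.1 x hx y hy z hz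
  · lift x₁ to K using hFK h₁; lift x₂ to K using hFK h₂
    lift x₃ to K using hFK h₃; lift x₄ to K using hFK h₄
    simpa only [extendCocycle_coe] using hc.2.2.1 x₁ h₁ x₂ h₂ x₃ h₃ x₄ h₄
  · lift g to K using hFK hg; lift x to K using hFK hx
    lift y to K using hFK hy; lift z to K using hFK hz
    simpa only [← Subgroup.coe_mul, extendCocycle_coe] using hc.2.2.2 g hg x hx y hy z hz

end extend

section lex

variable {S : Set H}

open scoped Classical in
noncomputable def orderSign (S : Set H) (x y : H) : ℤ :=
  if x⁻¹ * y ∈ S then 1 else if y⁻¹ * x ∈ S then -1 else 0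

theorem orderSign_eq_one_iff {x y : H} : orderSign S x y = 1 ↔ x⁻¹ * y ∈ S := by
  unfold orderSign
  split_ifs <;> simp_all

theorem orderSign_swap (hanti : ∀ s ∈ S, s⁻¹ ∉ S) (x y : H) :
    orderSign S y x = -orderSign S x y := by
  have h : x⁻¹ * y ∈ S → y⁻¹ * x ∉ S := fun hS => by
    simpa only [mul_inv_rev, inv_inv] using hanti _ hS
  unfold orderSign
  split_ifs <;> simp_all

theorem orderSign_self (hanti : ∀ s ∈ S, s⁻¹ ∉ S) (x : H) : orderSign S x x = 0 := by
  have := orderSign_swap hanti x x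
  omega

theorem orderSign_mul_left (g x y : H) : orderSign S (g * x) (g * y) = orderSign S x y := by
  have h : ∀ u v : H, (g * u)⁻¹ * (g * v) = u⁻¹ * v := fun u v => by group
  rw [orderSign, orderSign, h, h]

theorem orderSign_eq_zero_of_map_ne {φ : H →* C} (hker : S ⊆ φ.ker) {x y : H} (h : φ x ≠ φ y) :
    orderSign S x y = 0 := by
  have hmem : ∀ {u v : H}, φ u ≠ φ v → u⁻¹ * v ∉ S := fun huv hS => huv <| by
    have := hker hS
    rwa [SetLike.mem_coe, MonoidHom.mem_ker, map_mul, map_inv, inv_mul_eq_one] at this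
  simp [orderSign, hmem h, hmem (Ne.symm h)]

theorem orderSign_eq_one_or_neg_one {x y : H} (h : x⁻¹ * y ∈ S ∨ y⁻¹ * x ∈ S) :
    orderSign S x y = 1 ∨ orderSign S x y = -1 := by
  unfold orderSign
  split_ifs <;> simp_all

theorem orderSign_trans (hmul : ∀ a ∈ S, ∀ b ∈ S, a * b ∈ S) {x y z : H}
    (hxy : orderSign S x y = 1) (hyz : orderSign S y z = 1) : orderSign S x z = 1 := by
  rw [orderSign_eq_one_iff] at *
  simpa [mul_assoc] using hmul _ hxy _ hyz

/-- Transitivity rules out the cycles `x < y < z < x` and `x > y > z > x`. -/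
theorem orderSign_cyclic_sum (hmul : ∀ a ∈ S, ∀ b ∈ S, a * b ∈ S) (hanti : ∀ s ∈ S, s⁻¹ ∉ S)
    {x y z : H} (hxy : orderSign S x y = 1 ∨ orderSign S x y = -1)
    (hyz : orderSign S y z = 1 ∨ orderSign S y z = -1)
    (hzx : orderSign S z x = 1 ∨ orderSign S z x = -1) :
    orderSign S x y + orderSign S y z + orderSign S z x = 1 ∨
      orderSign S x y + orderSign S y z + orderSign S z x = -1 := by
  have hup : orderSign S x y = 1 → orderSign S y z = 1 → orderSign S z x = -1 := fun h₁ h₂ => by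
    rw [orderSign_swap hanti, orderSign_trans hmul h₁ h₂]
  have hdown : orderSign S x y = -1 → orderSign S y z = -1 → orderSign S z x = 1 := fun h₁ h₂ =>
    orderSign_trans hmul (y := y) (by rw [orderSign_swap hanti]; omega)
      (by rw [orderSign_swap hanti]; omega)
  omega

noncomputable def lexCocycle (φ : H →* C) (c : C → C → C → ℤ) (S : Set H) (x y z : H) : ℤ :=
  c (φ x) (φ y) (φ z) + (orderSign S x y + orderSign S y z + orderSign S z x)

variable {φ : H →* C} {c : C → C → C → ℤ}

theorem lexCocycle_mul_left (hc : IsCircularOrdering c) (g x y z : H) :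
    lexCocycle φ c S (g * x) (g * y) (g * z) = lexCocycle φ c S x y z := by
  simp only [lexCocycle, map_mul, hc.2.2.2, orderSign_mul_left]

theorem lexCocycle_cocycle (hc : IsCircularOrdering c) (hanti : ∀ s ∈ S, s⁻¹ ∉ S)
    (x₁ x₂ x₃ x₄ : H) :
    lexCocycle φ c S x₁ x₂ x₃ - lexCocycle φ c S x₁ x₂ x₄ + lexCocycle φ c S x₁ x₃ x₄
      - lexCocycle φ c S x₂ x₃ x₄ = 0 := by
  unfold lexCocycle
  linarith [hc.2.2.1 (φ x₁) (φ x₂) (φ x₃) (φ x₄), orderSign_swap hanti x₁ x₃,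
    orderSign_swap hanti x₂ x₄]

theorem lexCocycle_eq_zero (hc : IsCircularOrdering c) (hanti : ∀ s ∈ S, s⁻¹ ∉ S) {x y z : H}
    (h : x = y ∨ x = z ∨ y = z) : lexCocycle φ c S x y z = 0 := by
  have hc0 : c (φ x) (φ y) (φ z) = 0 := (hc.2.1 _ _ _).2 (by rcases h with rfl | rfl | rfl <;> simp)
  rcases h with rfl | rfl | rfl <;>
    simp only [lexCocycle, hc0, orderSign_self hanti, orderSign_swap hanti x] <;> ring

theorem lexCocycle_eq_one_or_neg_one (hc : IsCircularOrdering c)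
    (hmul : ∀ a ∈ S, ∀ b ∈ S, a * b ∈ S) (hanti : ∀ s ∈ S, s⁻¹ ∉ S) (hker : S ⊆ φ.ker)
    {A : Set H} (hA : ∀ u ∈ A, ∀ v ∈ A, u ≠ v → φ u = φ v → u⁻¹ * v ∈ S ∨ v⁻¹ * u ∈ S)
    {x y z : H} (hx : x ∈ A) (hy : y ∈ A) (hz : z ∈ A) (hxy : x ≠ y) (hxz : x ≠ z) (hyz : y ≠ z) :
    lexCocycle φ c S x y z = 1 ∨ lexCocycle φ c S x y z = -1 := by
  have hsign : ∀ {u v : H}, u ∈ A → v ∈ A → u ≠ v → φ u = φ v →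
      orderSign S u v = 1 ∨ orderSign S u v = -1 := fun hu hv hne h =>
    orderSign_eq_one_or_neg_one (hA _ hu _ hv hne h)
  have hzero : ∀ {u v : H}, φ u ≠ φ v → orderSign S u v = 0 := orderSign_eq_zero_of_map_ne hker
  unfold lexCocycle
  by_cases hφxy : φ x = φ y <;> by_cases hφyz : φ y = φ z <;> by_cases hφzx : φ z = φ x
  · rw [(hc.2.1 _ _ _).2 (Or.inl hφxy), zero_add]
    exact orderSign_cyclic_sum hmul hanti (hsign hx hy hxy hφxy) (hsign hy hz hyz hφyz)
      (hsign hz hx hxz.symm hφzx)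
  · exact (hφzx (hφxy.trans hφyz).symm).elim
  · exact (hφyz (hφxy.symm.trans hφzx.symm)).elim
  · rw [(hc.2.1 _ _ _).2 (Or.inl hφxy), hzero hφyz, hzero hφzx]
    have := hsign hx hy hxy hφxy
    omega
  · exact (hφxy (hφzx.symm.trans hφyz.symm)).elim
  · rw [(hc.2.1 _ _ _).2 (Or.inr (Or.inr hφyz)), hzero hφxy, hzero hφzx]
    have := hsign hy hz hyz hφyz
    omega
  · rw [(hc.2.1 _ _ _).2 (Or.inr (Or.inl hφzx.symm)), hzero hφxy, hzero hφyz]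
    have := hsign hz hx hxz.symm hφzx
    omega
  · have hne : c (φ x) (φ y) (φ z) ≠ 0 := by
      rw [Ne, hc.2.1]
      rintro (h | h | h)
      exacts [hφxy h, hφzx h.symm, hφyz h]
    rw [hzero hφxy, hzero hφyz, hzero hφzx]
    have := hc.1 (φ x) (φ y) (φ z)
    omega

theorem isCircularOrderingOn_lexCocycle (hc : IsCircularOrdering c)
    (hmul : ∀ a ∈ S, ∀ b ∈ S, a * b ∈ S) (hanti : ∀ s ∈ S, s⁻¹ ∉ S) (hker : S ⊆ φ.ker)
    {A : Set H}
    (hA : ∀ u ∈ A, ∀ v ∈ A, u⁻¹ * v ∈ φ.ker → u⁻¹ * v ∈ S ∨ (u⁻¹ * v)⁻¹ ∈ S ∨ u⁻¹ * v = 1) :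
    IsCircularOrderingOn A (lexCocycle φ c S) := by
  have hcomp : ∀ u ∈ A, ∀ v ∈ A, u ≠ v → φ u = φ v → u⁻¹ * v ∈ S ∨ v⁻¹ * u ∈ S := by
    intro u hu v hv hne h
    rcases hA u hu v hv (by rw [MonoidHom.mem_ker, map_mul, map_inv, h, inv_mul_cancel]) with
      h | h | h
    · exact Or.inl h
    · exact Or.inr (by simpa using h)
    · exact absurd (inv_mul_eq_one.1 h) hne
  have hnondeg : ∀ x ∈ A, ∀ y ∈ A, ∀ z ∈ A, ¬(x = y ∨ x = z ∨ y = z) →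
      lexCocycle φ c S x y z = 1 ∨ lexCocycle φ c S x y z = -1 := by
    intro x hx y hy z hz h
    push Not at h
    exact lexCocycle_eq_one_or_neg_one hc hmul hanti hker hcomp hx hy hz h.1 h.2.1 h.2.2
  refine ⟨fun x hx y hy z hz => ?_, fun x hx y hy z hz => ?_,
    fun x₁ _ x₂ _ x₃ _ x₄ _ => lexCocycle_cocycle hc hanti x₁ x₂ x₃ x₄,
    fun g _ x _ y _ z _ => lexCocycle_mul_left hc g x y z⟩
  · by_cases h : x = y ∨ x = z ∨ y = z
    · exact Or.inl (lexCocycle_eq_zero hc hanti h)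
    · exact Or.inr (hnondeg x hx y hy z hz h)
  · refine ⟨fun h0 => ?_, lexCocycle_eq_zero hc hanti⟩
    by_contra h
    rcases hnondeg x hx y hy z hz h with h1 | h1 <;> omega

end lex

end

/-- `G` is circularly orderable iff for each finite `X ⊆ G` there is a surjection
`φ : ⟨X⟩ → C` onto a circularly orderable group and an antisymmetric subsemigroup
`S ⊆ ker φ` with `X⁻¹X ∩ ker φ ⊆ S ∪ S⁻¹ ∪ {1}`. -/
theorem circularlyOrderable_iff_semigroup {G : Type u} [Group G] :
    CircularlyOrderable G ↔
      ∀ X : Finset G,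
        ∃ (C : Type u) (_ : Group C) (φ : Subgroup.closure (X : Set G) →* C),
          Function.Surjective φ ∧ CircularlyOrderable C ∧
          ∃ S : Set (Subgroup.closure (X : Set G)),
            (∀ a ∈ S, ∀ b ∈ S, a * b ∈ S) ∧
            (∀ s ∈ S, s⁻¹ ∉ S) ∧
            (∀ s ∈ S, s ∈ φ.ker) ∧
            ∀ g : Subgroup.closure (X : Set G),
              (∃ x ∈ X, ∃ y ∈ X, (g : G) = x⁻¹ * y) → g ∈ φ.ker →
                (g ∈ S ∨ g⁻¹ ∈ S ∨ g = 1) := by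
  constructor
  · rintro ⟨c, hc⟩ X
    refine ⟨_, inferInstance, MonoidHom.id _, Function.surjective_id,
      ⟨_, hc.comap _ (Subgroup.subtype_injective _)⟩, ∅, by simp, by simp, by simp,
      fun g _ hg => Or.inr (Or.inr hg)⟩
  · intro h
    refine circularlyOrderable_of_forall_finset fun X => ?_
    obtain ⟨C, _, φ, -, ⟨c, hc⟩, S, hmul, hanti, hker, hcov⟩ := h X
    exact ⟨_, IsCircularOrderingOn.extendCocycle Subgroup.subset_closure <|
      isCircularOrderingOn_lexCocycle hc hmul hanti hker fun x hx y hy =>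
        hcov _ ⟨x, hx, y, hy, rfl⟩⟩
end

section
/- A group G is circularly orderable if and only if for every finite subset X of G there exists a surjective homomorphism φ from ⟨X⟩ onto a circularly orderable group C such that the restriction of φ to X is injective. -/
open Filter


lemma exists_partial {G : Type u} [Group G]
    (h : ∀ X : Finset G,
        ∃ (C : Type u) (_ : Group C) (φ : Subgroup.closure (X : Set G) →* C),
          Function.Surjective φ ∧ CircularlyOrderable C ∧
          ∀ x (hx : x ∈ X) y (hy : y ∈ X),
            φ ⟨x, Subgroup.subset_closure hx⟩ = φ ⟨y, Subgroup.subset_closure hy⟩ →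
              x = y)
    (X : Finset G) :
    ∃ f : G → G → G → ℤ,
      (∀ x y z, f x y z = 0 ∨ f x y z = 1 ∨ f x y z = -1) ∧
      (∀ x ∈ X, ∀ y ∈ X, ∀ z ∈ X, (f x y z = 0 ↔ x = y ∨ x = z ∨ y = z)) ∧
      (∀ x₁ ∈ X, ∀ x₂ ∈ X, ∀ x₃ ∈ X, ∀ x₄ ∈ X,
        f x₁ x₂ x₃ - f x₁ x₂ x₄ + f x₁ x₃ x₄ - f x₂ x₃ x₄ = 0) ∧
      (∀ g ∈ X, ∀ x ∈ X, ∀ y ∈ X, ∀ z ∈ X, f (g*x) (g*y) (g*z) = f x y z) := by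
  classical
  obtain ⟨C, _, φ, hsurj, ⟨c, hc0, hc1, hc2, hc3⟩, hinj⟩ := h X
  refine ⟨fun x y z => if h : x ∈ Subgroup.closure (X : Set G) ∧ y ∈ Subgroup.closure (X : Set G) ∧ z ∈ Subgroup.closure (X : Set G) then
      c (φ ⟨x, h.1⟩) (φ ⟨y, h.2.1⟩) (φ ⟨z, h.2.2⟩) else 0, ?_, ?_, ?_, ?_⟩
  · intro x y z
    by_cases h : x ∈ Subgroup.closure (X : Set G) ∧ y ∈ Subgroup.closure (X : Set G) ∧ z ∈ Subgroup.closure (X : Set G)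
    · simp only [dif_pos h]; exact hc0 _ _ _
    · simp [dif_neg h]
  · intro x hx y hy z hz
    have hx' : x ∈ Subgroup.closure (X : Set G) := Subgroup.subset_closure hx
    have hy' : y ∈ Subgroup.closure (X : Set G) := Subgroup.subset_closure hy
    have hz' : z ∈ Subgroup.closure (X : Set G) := Subgroup.subset_closure hz
    beta_reduce
    rw [dif_pos ⟨hx', hy', hz'⟩, hc1]
    constructor
    · rintro (h | h | h)
      · exact Or.inl (hinj x hx y hy h)
      · exact Or.inr (Or.inl (hinj x hx z hz h))
      · exact Or.inr (Or.inr (hinj y hy z hz h))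
    · rintro (rfl | rfl | rfl)
      · exact Or.inl rfl
      · exact Or.inr (Or.inl rfl)
      · exact Or.inr (Or.inr rfl)
  · intro x₁ h1 x₂ h2 x₃ h3 x₄ h4
    have m1 : x₁ ∈ Subgroup.closure (X : Set G) := Subgroup.subset_closure h1
    have m2 : x₂ ∈ Subgroup.closure (X : Set G) := Subgroup.subset_closure h2
    have m3 : x₃ ∈ Subgroup.closure (X : Set G) := Subgroup.subset_closure h3
    have m4 : x₄ ∈ Subgroup.closure (X : Set G) := Subgroup.subset_closure h4
    beta_reduce
    rw [dif_pos ⟨m1, m2, m3⟩, dif_pos ⟨m1, m2, m4⟩, dif_pos ⟨m1, m3, m4⟩,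
      dif_pos ⟨m2, m3, m4⟩]
    exact hc2 _ _ _ _
  · intro g hg x hx y hy z hz
    have mg : g ∈ Subgroup.closure (X : Set G) := Subgroup.subset_closure hg
    have mx : x ∈ Subgroup.closure (X : Set G) := Subgroup.subset_closure hx
    have my : y ∈ Subgroup.closure (X : Set G) := Subgroup.subset_closure hy
    have mz : z ∈ Subgroup.closure (X : Set G) := Subgroup.subset_closure hz
    beta_reduce
    rw [dif_pos ⟨Subgroup.mul_mem _ mg mx, Subgroup.mul_mem _ mg my, Subgroup.mul_mem _ mg mz⟩,
      dif_pos ⟨mx, my, mz⟩]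
    have e : ∀ (a : G) (ha : a ∈ Subgroup.closure (X : Set G)),
        φ ⟨g * a, Subgroup.mul_mem _ mg ha⟩ = φ ⟨g, mg⟩ * φ ⟨a, ha⟩ := by
      intro a ha
      rw [show (⟨g * a, Subgroup.mul_mem _ mg ha⟩ : Subgroup.closure (X : Set G)) = ⟨g, mg⟩ * ⟨a, ha⟩ from rfl, map_mul]
    rw [e x mx, e y my, e z mz, hc3]

/-- `G` is circularly orderable iff for each finite `X ⊆ G` there is a surjection
`φ : ⟨X⟩ → C` onto a circularly orderable group with `φ` injective on `X`. -/
theorem circularlyOrderable_iff_injective {G : Type u} [Group G] :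
    CircularlyOrderable G ↔
      ∀ X : Finset G,
        ∃ (C : Type u) (_ : Group C) (φ : Subgroup.closure (X : Set G) →* C),
          Function.Surjective φ ∧ CircularlyOrderable C ∧
          ∀ x (hx : x ∈ X) y (hy : y ∈ X),
            φ ⟨x, Subgroup.subset_closure hx⟩ = φ ⟨y, Subgroup.subset_closure hy⟩ →
              x = y := by
  classical
  constructor
  · rintro ⟨c, hc0, hc1, hc2, hc3⟩ X
    refine ⟨Subgroup.closure (X : Set G), inferInstance, MonoidHom.id _,
      Function.surjective_id, ⟨fun a b d => c a b d, ?_, ?_, ?_, ?_⟩, ?_⟩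
    · intro x y z; exact hc0 _ _ _
    · intro x y z
      rw [hc1]
      simp only [SetLike.coe_eq_coe]
    · intro x₁ x₂ x₃ x₄; exact hc2 _ _ _ _
    · intro g x y z
      exact hc3 (g : G) x y z
    · intro x hx y hy hxy
      simpa using congrArg (Subtype.val) hxy
  · intro h
    choose f hf1 hf2 hf3 hf4 using exists_partial h
    haveI : Nonempty (Finset G) := ⟨∅⟩
    let U : Ultrafilter (Finset G) := Ultrafilter.of atTop
    have hU : (U : Filter (Finset G)) ≤ atTop := Ultrafilter.of_le _
    have hmem : ∀ s : Finset G, {X : Finset G | s ≤ X} ∈ U :=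
      fun s => hU (mem_atTop s)
    set c : G → G → G → ℤ := fun x y z =>
      if {X | f X x y z = 0} ∈ U then 0
      else if {X | f X x y z = 1} ∈ U then 1 else -1 with hcdef
    have hlim : ∀ x y z, {X | f X x y z = c x y z} ∈ U := by
      intro x y z
      rw [hcdef]
      beta_reduce
      split_ifs with h0 h1
      · exact h0
      · exact h1
      · have htri : ∀ᶠ X in (U : Filter (Finset G)),
            f X x y z = 0 ∨ f X x y z = 1 ∨ f X x y z = -1 :=
          Eventually.of_forall (fun X => hf1 X x y z)
        rcases (Ultrafilter.eventually_or.mp htri) with h | h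
        · exact absurd h h0
        · rcases (Ultrafilter.eventually_or.mp h) with h | h
          · exact absurd h h1
          · exact h
    have hval : ∀ x y z v, {X | f X x y z = v} ∈ U → c x y z = v := by
      intro x y z v hv
      obtain ⟨X, hX1, hX2⟩ := Filter.nonempty_of_mem (Filter.inter_mem hv (hlim x y z))
      rw [← hX2, hX1]
    refine ⟨c, ?_, ?_, ?_, ?_⟩
    · intro x y z
      obtain ⟨X, hX⟩ := Filter.nonempty_of_mem (hlim x y z)
      exact hX ▸ hf1 X x y z
    · intro x y z
      constructor
      · intro h0
        obtain ⟨X, hX1, hX2⟩ := Filter.nonempty_of_mem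
          (Filter.inter_mem (hmem {x, y, z}) (hlim x y z))
        have hsub := hX1
        simp only [Set.mem_setOf_eq, Finset.le_iff_subset, Finset.insert_subset_iff,
          Finset.singleton_subset_iff] at hsub
        exact (hf2 X x hsub.1 y hsub.2.1 z hsub.2.2).mp (by rw [hX2, h0])
      · intro hrep
        refine hval x y z 0 (Filter.mem_of_superset (hmem {x, y, z}) ?_)
        intro X hX
        simp only [Set.mem_setOf_eq, Finset.le_iff_subset, Finset.insert_subset_iff,
          Finset.singleton_subset_iff] at hX
        exact (hf2 X x hX.1 y hX.2.1 z hX.2.2).mpr hrep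
    · intro x₁ x₂ x₃ x₄
      obtain ⟨X, h0, h1, h2, h3, h4⟩ := Filter.nonempty_of_mem
        (Filter.inter_mem (hmem {x₁, x₂, x₃, x₄})
          (Filter.inter_mem (hlim x₁ x₂ x₃)
            (Filter.inter_mem (hlim x₁ x₂ x₄)
              (Filter.inter_mem (hlim x₁ x₃ x₄) (hlim x₂ x₃ x₄)))))
      simp only [Set.mem_setOf_eq, Finset.le_iff_subset, Finset.insert_subset_iff,
        Finset.singleton_subset_iff] at h0
      rw [← h1, ← h2, ← h3, ← h4]
      exact hf3 X x₁ h0.1 x₂ h0.2.1 x₃ h0.2.2.1 x₄ h0.2.2.2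
    · intro g x y z
      obtain ⟨X, h0, h1, h2⟩ := Filter.nonempty_of_mem
        (Filter.inter_mem (hmem {g, x, y, z})
          (Filter.inter_mem (hlim (g*x) (g*y) (g*z)) (hlim x y z)))
      simp only [Set.mem_setOf_eq, Finset.le_iff_subset, Finset.insert_subset_iff,
        Finset.singleton_subset_iff] at h0
      rw [← h1, ← h2]
      exact hf4 X g h0.1 x h0.2.1 y h0.2.2.1 z h0.2.2.2
end
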